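/- arXiv:1512.00739 — 4 statements merged into one kernel-verified Lean document; each statement's English description precedes it below -/
import Mathlib

section
/- Let K ⊂ ℂ^n be compact, let Q : K → ℝ be continuous, and let ν be a finite Borel measure on K such that (K, ν, Q) satisfies the weighted Bernstein–Markov property. For k ≥ 1 let N_k = C(n+k, k), let e_1,…,e_{N_k} be the monomials of degree at most k in n variables, and for x = (x_1,…,x_{N_k}) ∈ K^{N_k} let VDM_k(x) := det[e_i(x_j)]_{i,j=1,…,N_k}. Set δ^{Q,k}(K) := (max_{x ∈ K^{N_k}} |VDM_k(x)| e^{-kQ(x_1)}⋯e^{-kQ(x_{N_k})})^{(n+1)/(n k N_k)} and Z_k := ∫_{K^{N_k}} |VDM_k(x)|² e^{-2kQ(x_1)}⋯e^{-2kQ(x_{N_k})} dν(x_1)⋯dν(x_{N_k}). If δ^{Q,k}(K) → L as k → ∞ for some L ≥ 0, then Z_k^{(n+1)/(2 n k N_k)} → L as k → ∞. -/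
open MeasureTheory Filter

variable {n : ℕ}

/-- `(K, ν, Q)` satisfies the weighted Bernstein–Markov property in `ℂ^n`
(with `w = e^{-Q}`). -/
def WeightedBernsteinMarkov (K : Set (Fin n → ℂ)) (ν : Measure (Fin n → ℂ))
    (Q : (Fin n → ℂ) → ℝ) : Prop :=
  ∀ ε : ℝ, 0 < ε → ∃ C : ℝ, 0 < C ∧ ∀ k : ℕ, 1 ≤ k → ∀ p : MvPolynomial (Fin n) ℂ,
    p.totalDegree ≤ k → ∀ z ∈ K,
      ‖MvPolynomial.eval z p‖ * Real.exp (-Q z) ^ k ≤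
        C * (1 + ε) ^ k *
          Real.sqrt (∫ w in K, ‖MvPolynomial.eval w p‖ ^ 2 *
            Real.exp (-Q w) ^ (2 * k) ∂ν)

/-- `N_k = C(n+k, k)`, the dimension of the space of polynomials of degree at most `k`
in `n` variables. -/
def Nk (n k : ℕ) : ℕ := (n + k).choose k

/-- The generalized Vandermonde determinant `VDM_k(x) = det [e_i(x_j)]`, where the
`e_i` are the monomials of degree at most `k` in `n` variables, enumerated by a
bijection `e : Fin N_k ≃ {multi-indices of total degree ≤ k}`. -/
noncomputable def VDM (k : ℕ)
    (e : Fin (Nk n k) ≃ {d : Fin n →₀ ℕ // (d.sum fun _ m => m) ≤ k})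
    (x : Fin (Nk n k) → (Fin n → ℂ)) : ℂ :=
  Matrix.det (Matrix.of fun i j : Fin (Nk n k) => ∏ t : Fin n, x j t ^ ((e i : Fin n →₀ ℕ) t))

/-- `Z_k = ∫_{K^{N_k}} |VDM_k(x)|² e^{-2kQ(x_1)} ⋯ e^{-2kQ(x_{N_k})} dν(x_1)⋯dν(x_{N_k})`. -/
noncomputable def Zk (K : Set (Fin n → ℂ)) (ν : Measure (Fin n → ℂ))
    (Q : (Fin n → ℂ) → ℝ) (k : ℕ)
    (e : Fin (Nk n k) ≃ {d : Fin n →₀ ℕ // (d.sum fun _ m => m) ≤ k}) : ℝ :=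
  ∫ x in {x : Fin (Nk n k) → (Fin n → ℂ) | ∀ j, x j ∈ K},
    ‖VDM k e x‖ ^ 2 * ∏ j : Fin (Nk n k), Real.exp (-(2 * (k : ℝ)) * Q (x j))
    ∂(Measure.pi fun _ : Fin (Nk n k) => ν)

/-- The weighted `k`-th order diameter
`δ^{Q,k}(K) = (max_{x ∈ K^{N_k}} |VDM_k(x)| e^{-kQ(x_1)}⋯e^{-kQ(x_{N_k})})^{(n+1)/(n k N_k)}`. -/
noncomputable def deltaQk (K : Set (Fin n → ℂ)) (Q : (Fin n → ℂ) → ℝ) (k : ℕ)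
    (e : Fin (Nk n k) ≃ {d : Fin n →₀ ℕ // (d.sum fun _ m => m) ≤ k}) : ℝ :=
  (sSup ((fun x : Fin (Nk n k) → (Fin n → ℂ) =>
      ‖VDM k e x‖ * ∏ j : Fin (Nk n k), Real.exp (-(k : ℝ) * Q (x j))) ''
    {x : Fin (Nk n k) → (Fin n → ℂ) | ∀ j, x j ∈ K})) ^
      (((n : ℝ) + 1) / ((n : ℝ) * (k : ℝ) * (Nk n k : ℝ)))

open scoped ENNReal Topology

/-!
Let `M_k` be the maximum over `K ^ N_k` of the weighted Vandermonde
`|VDM_k(x)| e^{-kQ(x_1)} ⋯ e^{-kQ(x_{N_k})}`, so that `δ^{Q,k}(K) = M_k ^ ((n+1)/(n k N_k))`.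
Trivially `Z_k ≤ M_k² ν(K)^{N_k}`. Conversely, as a function of one point `x_j` with the others
frozen, the weighted Vandermonde is a weighted polynomial of degree `≤ k`, so Bernstein–Markov
bounds its square at `x_j` by `(C(1+ε)^k)²` times its `L²(ν)`-norm squared in `x_j`; integrating
out the `N_k` points one at a time gives `M_k² ≤ (C(1+ε)^k)^{2N_k} Z_k`. After taking
`(n+1)/(2 n k N_k)`-th powers the constants become `ν(K)^{O(1/k)}` and
`C^{O(1/k)} (1+ε)^{(n+1)/n}`, which squeezes `Z_k^{(n+1)/(2 n k N_k)}` to `L`.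
Only `Q|_K` enters, so by Tietze we may take `Q` continuous on all of `ℂ^n`, which makes the
integrands measurable on the full product.
-/


theorem tendsto_of_le_mul_of_frequently_le_mul {α : Type*} {l : Filter α} {T δ c : α → ℝ}
    {L : ℝ} (hδ : Tendsto δ l (𝓝 L)) (hc : Tendsto c l (𝓝 1)) (hup : ∀ᶠ k in l, T k ≤ c k * δ k)
    (hlow : ∃ᶠ r in 𝓝 (1 : ℝ), ∃ d : α → ℝ, Tendsto d l (𝓝 r) ∧ ∀ᶠ k in l, δ k ≤ d k * T k) :
    Tendsto T l (𝓝 L) := by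
  rw [tendsto_order]
  refine ⟨fun a ha => ?_, fun b hb => ?_⟩
  · have hr : ∀ᶠ r in 𝓝 (1 : ℝ), 0 < r ∧ r * a < L :=
      (eventually_gt_nhds one_pos).and
        ((tendsto_id.mul_const a).eventually_lt_const (by simpa using ha))
    obtain ⟨r, ⟨d, hd, hδd⟩, hr0, hra⟩ := (hlow.and_eventually hr).exists
    filter_upwards [hd.eventually_const_lt hr0, (hd.mul_const a).eventually_lt hδ hra, hδd]
      with k hdk hdaδ hδk
    by_contra! hTa
    nlinarith [mul_le_mul_of_nonneg_left hTa hdk.le]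
  · have hcδ : Tendsto (fun k => c k * δ k) l (𝓝 L) := by simpa using hc.mul hδ
    filter_upwards [hup, hcδ.eventually_lt_const hb] with k hTk hk using hTk.trans_lt hk

theorem Real.tendsto_rpow_div_natCast_atTop {b : ℝ} (hb : 0 < b) (s : ℝ) :
    Tendsto (fun k : ℕ => b ^ (s / k)) atTop (𝓝 1) := by
  have h := (Real.continuousAt_const_rpow hb.ne').tendsto.comp
    (tendsto_const_div_atTop_nhds_zero_nat s)
  rwa [Real.rpow_zero] at h

theorem Real.tendsto_mul_pow_rpow_div_natCast_atTop {C x : ℝ} (hC : 0 < C) (hx : 0 ≤ x) (s : ℝ) :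
    Tendsto (fun k : ℕ => (C * x ^ k) ^ (s / k)) atTop (𝓝 (x ^ s)) := by
  have h := (Real.tendsto_rpow_div_natCast_atTop hC s).mul_const (x ^ s)
  rw [one_mul] at h
  refine h.congr' ((eventually_ne_atTop 0).mono fun k hk => ?_)
  dsimp only
  rw [Real.mul_rpow hC.le (pow_nonneg hx k), ← Real.rpow_natCast x, ← Real.rpow_mul hx,
    mul_div_cancel₀ _ (Nat.cast_ne_zero.mpr hk)]

theorem Real.pow_rpow_div_mul {x : ℝ} (hx : 0 ≤ x) {m : ℕ} (hm : m ≠ 0) (c d : ℝ) :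
    (x ^ m) ^ (c / (d * m)) = x ^ (c / d) := by
  rw [← Real.rpow_natCast, ← Real.rpow_mul hx, mul_div_assoc', mul_comm (m : ℝ) c,
    mul_div_mul_right _ _ (Nat.cast_ne_zero.mpr hm)]

section Marginal

variable {ι : Type*} [DecidableEq ι] {X : ι → Type*} [∀ i, MeasurableSpace (X i)]
  {μ : ∀ i, Measure (X i)} [∀ i, SigmaFinite (μ i)] {K : ∀ i, Set (X i)}
  {f : (∀ i, X i) → ℝ≥0∞} {B : ℝ≥0∞}

theorem le_pow_card_mul_lmarginal_restrict (hK : ∀ i, MeasurableSet (K i)) (hf : Measurable f)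
    (h : ∀ x ∈ Set.univ.pi K, ∀ j, f x ≤ B * ∫⁻ t in K j, f (Function.update x j t) ∂μ j)
    (s : Finset ι) :
    ∀ x ∈ Set.univ.pi K, f x ≤ B ^ s.card * (∫⋯∫⁻_s, f ∂fun i => (μ i).restrict (K i)) x := by
  induction s using Finset.induction_on with
  | empty => simp
  | @insert j s hj ih =>
    intro x hx
    have hupd : ∀ t ∈ K j, Function.update x j t ∈ Set.univ.pi K := fun t ht =>
      (Set.update_mem_pi_iff_of_mem hx).mpr fun _ => ht
    calc f x ≤ B * ∫⁻ t in K j, f (Function.update x j t) ∂μ j := h x hx j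
      _ ≤ B * ∫⁻ t in K j, B ^ s.card *
            (∫⋯∫⁻_s, f ∂fun i => (μ i).restrict (K i)) (Function.update x j t) ∂μ j :=
        mul_le_mul_right (setLIntegral_mono' (hK j) fun t ht => ih _ (hupd t ht)) B
      _ = B ^ (insert j s).card * (∫⋯∫⁻_insert j s, f ∂fun i => (μ i).restrict (K i)) x := by
        have hm : Measurable fun t =>
            (∫⋯∫⁻_s, f ∂fun i => (μ i).restrict (K i)) (Function.update x j t) :=
          (hf.lmarginal _).comp (measurable_update x)
        rw [lintegral_const_mul _ hm, lmarginal_insert _ hf hj, Finset.card_insert_of_notMem hj,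
          pow_succ]
        ring

theorem le_pow_card_mul_setLIntegral_pi [Fintype ι] (hK : ∀ i, MeasurableSet (K i))
    (hf : Measurable f)
    (h : ∀ x ∈ Set.univ.pi K, ∀ j, f x ≤ B * ∫⁻ t in K j, f (Function.update x j t) ∂μ j) :
    ∀ x ∈ Set.univ.pi K,
      f x ≤ B ^ Fintype.card ι * ∫⁻ y in Set.univ.pi K, f y ∂Measure.pi μ := by
  intro x hx
  simpa [Measure.restrict_pi_pi] using le_pow_card_mul_lmarginal_restrict hK hf h Finset.univ x hx

end Marginal

theorem le_pow_card_mul_setIntegral_pi {ι α : Type*} [Fintype ι] [DecidableEq ι]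
    [TopologicalSpace α] [T2Space α] [SecondCountableTopology α] [MeasurableSpace α]
    [BorelSpace α]
    (μ : Measure α) [IsFiniteMeasure μ] {K : Set α} (hK : IsCompact K)
    {f : (ι → α) → ℝ} (hf : Continuous f) (hf0 : ∀ x, 0 ≤ f x) {B : ℝ} (hB : 0 ≤ B)
    (h : ∀ x ∈ Set.univ.pi (fun _ => K), ∀ j,
      f x ≤ B * ∫ t in K, f (Function.update x j t) ∂μ) :
    ∀ x ∈ Set.univ.pi (fun _ => K),
      f x ≤ B ^ Fintype.card ι *
        ∫ y in Set.univ.pi (fun _ => K), f y ∂Measure.pi fun _ => μ := by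
  intro x hx
  have key := le_pow_card_mul_setLIntegral_pi (μ := fun _ => μ) (K := fun _ => K)
    (f := fun y => ENNReal.ofReal (f y)) (B := ENNReal.ofReal B) (fun _ => hK.measurableSet)
    (ENNReal.measurable_ofReal.comp hf.measurable) ?_ x hx
  · rw [← ofReal_integral_eq_lintegral_ofReal
      (hf.continuousOn.integrableOn_compact (isCompact_univ_pi fun _ => hK)) (ae_of_all _ hf0),
      ← ENNReal.ofReal_pow hB, ← ENNReal.ofReal_mul (pow_nonneg hB _)] at key
    exact (ENNReal.ofReal_le_ofReal_iff
      (mul_nonneg (pow_nonneg hB _) (integral_nonneg fun _ => hf0 _))).1 key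
  · intro y hy j
    have hint : IntegrableOn (fun t => f (Function.update y j t)) K μ :=
      (hf.comp (continuous_const.update j continuous_id)).continuousOn.integrableOn_compact hK
    rw [← ofReal_integral_eq_lintegral_ofReal hint (ae_of_all _ fun _ => hf0 _),
      ← ENNReal.ofReal_mul hB]
    exact ENNReal.ofReal_le_ofReal (h y hy j)

theorem MvPolynomial.exists_totalDegree_le_eval_eq_det_updateCol {σ ι R : Type*} [Fintype σ]
    [Fintype ι] [DecidableEq ι] [CommRing R] (A : Matrix ι ι R) (d : ι → σ →₀ ℕ) {k : ℕ}
    (hd : ∀ i, (d i).sum (fun _ m => m) ≤ k) (j : ι) :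
    ∃ p : MvPolynomial σ R, p.totalDegree ≤ k ∧
      ∀ z : σ → R, eval z p = (A.updateCol j fun i => ∏ t, z t ^ d i t).det := by
  refine ⟨∑ i, monomial (d i) (A.cramer (Pi.single i 1) j), ?_, fun z => ?_⟩
  · exact (totalDegree_finsetSum _ _).trans
      (Finset.sup_le fun i _ => (totalDegree_monomial_le _ _).trans (hd i))
  · have hb : (fun i => ∏ t, z t ^ d i t) = ∑ i, (∏ t, z t ^ d i t) • Pi.single i (1 : R) := by
      ext i
      simp [Finset.sum_apply, Pi.single_apply]
    rw [← Matrix.cramer_apply, hb]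
    simp [eval_monomial, Finsupp.prod_fintype, Finset.sum_apply, mul_comm]

theorem Nk_pos (n k : ℕ) : 0 < Nk n k := Nat.choose_pos (Nat.le_add_left k n)

section Vandermonde

variable {k : ℕ} (e : Fin (Nk n k) ≃ {d : Fin n →₀ ℕ // (d.sum fun _ m => m) ≤ k})

theorem exists_totalDegree_le_eval_eq_VDM_update (x : Fin (Nk n k) → Fin n → ℂ)
    (j : Fin (Nk n k)) :
    ∃ p : MvPolynomial (Fin n) ℂ, p.totalDegree ≤ k ∧
      ∀ z, MvPolynomial.eval z p = VDM k e (Function.update x j z) := by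
  obtain ⟨p, hp, hpz⟩ := MvPolynomial.exists_totalDegree_le_eval_eq_det_updateCol
    (Matrix.of fun i l => ∏ t, x l t ^ (e i : Fin n →₀ ℕ) t) (fun i => (e i : Fin n →₀ ℕ))
    (k := k) (fun i => (e i).2) j
  refine ⟨p, hp, fun z => ?_⟩
  rw [hpz, VDM]
  congr 1
  ext i l
  by_cases hl : l = j <;> simp [Function.update_apply, hl]

theorem continuous_VDM : Continuous (VDM k e) := by
  unfold VDM
  refine Continuous.matrix_det (continuous_matrix fun i j => ?_)
  simp only [Matrix.of_apply]
  fun_prop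

end Vandermonde

theorem Real.exp_neg_natCast_mul (k : ℕ) (q : ℝ) :
    Real.exp (-(k : ℝ) * q) = Real.exp (-q) ^ k := by
  rw [← Real.exp_nat_mul]
  ring_nf

theorem Set.setOf_forall_mem_eq_univ_pi {ι α : Type*} (K : Set α) :
    {x : ι → α | ∀ j, x j ∈ K} = Set.univ.pi fun _ => K := by
  ext
  simp

noncomputable def weightedVDM (Q : (Fin n → ℂ) → ℝ) (k : ℕ)
    (e : Fin (Nk n k) ≃ {d : Fin n →₀ ℕ // (d.sum fun _ m => m) ≤ k})
    (x : Fin (Nk n k) → Fin n → ℂ) : ℝ :=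
  ‖VDM k e x‖ * ∏ j, Real.exp (-(k : ℝ) * Q (x j))

noncomputable def supWeightedVDM (K : Set (Fin n → ℂ)) (Q : (Fin n → ℂ) → ℝ) (k : ℕ)
    (e : Fin (Nk n k) ≃ {d : Fin n →₀ ℕ // (d.sum fun _ m => m) ≤ k}) : ℝ :=
  sSup (weightedVDM Q k e '' {x | ∀ j, x j ∈ K})

/-- `WeightedBernsteinMarkov K ν Q` unfolds to
`∀ ε > 0, ∃ C > 0, ∀ k ≥ 1, BernsteinMarkovIneq K ν Q k (C * (1 + ε) ^ k)`. -/
def BernsteinMarkovIneq (K : Set (Fin n → ℂ)) (ν : Measure (Fin n → ℂ))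
    (Q : (Fin n → ℂ) → ℝ) (k : ℕ) (A : ℝ) : Prop :=
  ∀ p : MvPolynomial (Fin n) ℂ, p.totalDegree ≤ k → ∀ z ∈ K,
    ‖MvPolynomial.eval z p‖ * Real.exp (-Q z) ^ k ≤
      A * Real.sqrt (∫ w in K, ‖MvPolynomial.eval w p‖ ^ 2 * Real.exp (-Q w) ^ (2 * k) ∂ν)

section Weighted

variable {K : Set (Fin n → ℂ)} {Q : (Fin n → ℂ) → ℝ} {k : ℕ}
  (e : Fin (Nk n k) ≃ {d : Fin n →₀ ℕ // (d.sum fun _ m => m) ≤ k})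

theorem weightedVDM_update (x : Fin (Nk n k) → Fin n → ℂ) (j : Fin (Nk n k)) (t : Fin n → ℂ) :
    weightedVDM Q k e (Function.update x j t) = ‖VDM k e (Function.update x j t)‖ *
      Real.exp (-Q t) ^ k * ∏ i ∈ Finset.univ \ {j}, Real.exp (-(k : ℝ) * Q (x i)) := by
  rw [weightedVDM, mul_assoc, ← Real.exp_neg_natCast_mul, ← Finset.prod_update_of_mem
    (Finset.mem_univ j)]
  congr 2 with i
  by_cases hi : i = j <;> simp [hi]

theorem sq_weightedVDM (x : Fin (Nk n k) → Fin n → ℂ) :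
    weightedVDM Q k e x ^ 2 =
      ‖VDM k e x‖ ^ 2 * ∏ j, Real.exp (-(2 * (k : ℝ)) * Q (x j)) := by
  rw [weightedVDM, mul_pow, ← Finset.prod_pow]
  refine congrArg _ (Finset.prod_congr rfl fun j _ => ?_)
  rw [← Real.exp_nat_mul]
  push_cast
  ring_nf

theorem continuous_weightedVDM (hQ : Continuous Q) : Continuous (weightedVDM Q k e) := by
  have := continuous_VDM e
  unfold weightedVDM
  fun_prop

theorem sq_weightedVDM_le_mul_setIntegral_update {ν : Measure (Fin n → ℂ)} {A : ℝ}
    (hA : BernsteinMarkovIneq K ν Q k A) {x : Fin (Nk n k) → Fin n → ℂ}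
    (hx : x ∈ Set.univ.pi fun _ => K) (j : Fin (Nk n k)) :
    weightedVDM Q k e x ^ 2 ≤
      A ^ 2 * ∫ t in K, weightedVDM Q k e (Function.update x j t) ^ 2 ∂ν := by
  obtain ⟨p, hp, hpz⟩ := exists_totalDegree_le_eval_eq_VDM_update e x j
  set R := ∏ i ∈ Finset.univ \ {j}, Real.exp (-(k : ℝ) * Q (x i))
  have hupd : ∀ t, weightedVDM Q k e (Function.update x j t) =
      ‖MvPolynomial.eval t p‖ * Real.exp (-Q t) ^ k * R := fun t => by
    rw [weightedVDM_update, hpz]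
  have hx' : weightedVDM Q k e x = ‖MvPolynomial.eval (x j) p‖ * Real.exp (-Q (x j)) ^ k * R := by
    rw [← hupd, Function.update_eq_self]
  have hI : 0 ≤ ∫ w in K, ‖MvPolynomial.eval w p‖ ^ 2 * Real.exp (-Q w) ^ (2 * k) ∂ν :=
    integral_nonneg fun _ => by positivity
  calc weightedVDM Q k e x ^ 2
      = (‖MvPolynomial.eval (x j) p‖ * Real.exp (-Q (x j)) ^ k) ^ 2 * R ^ 2 := by rw [hx', mul_pow]
    _ ≤ (A * Real.sqrt (∫ w in K, ‖MvPolynomial.eval w p‖ ^ 2 * Real.exp (-Q w) ^ (2 * k) ∂ν)) ^ 2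
          * R ^ 2 := by gcongr ?_ ^ 2 * _; exact hA p hp (x j) (hx j (Set.mem_univ j))
    _ = A ^ 2 * ∫ t in K, (‖MvPolynomial.eval t p‖ ^ 2 * Real.exp (-Q t) ^ (2 * k)) * R ^ 2 ∂ν := by
        rw [integral_mul_const, mul_pow, Real.sq_sqrt hI, mul_assoc]
    _ = A ^ 2 * ∫ t in K, weightedVDM Q k e (Function.update x j t) ^ 2 ∂ν := by
        simp_rw [hupd]
        congr 2 with t
        ring

end Weighted

section Bounds

variable {K : Set (Fin n → ℂ)} {Q : (Fin n → ℂ) → ℝ} {ν : Measure (Fin n → ℂ)} {k : ℕ}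
  (e : Fin (Nk n k) ≃ {d : Fin n →₀ ℕ // (d.sum fun _ m => m) ≤ k})

theorem weightedVDM_nonneg (x : Fin (Nk n k) → Fin n → ℂ) : 0 ≤ weightedVDM Q k e x := by
  unfold weightedVDM
  positivity

theorem supWeightedVDM_nonneg : 0 ≤ supWeightedVDM K Q k e :=
  Real.sSup_nonneg (by rintro _ ⟨x, -, rfl⟩; exact weightedVDM_nonneg e x)

theorem weightedVDM_le_supWeightedVDM (hK : IsCompact K) (hQ : Continuous Q)
    {x : Fin (Nk n k) → Fin n → ℂ} (hx : x ∈ Set.univ.pi fun _ => K) :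
    weightedVDM Q k e x ≤ supWeightedVDM K Q k e := by
  rw [supWeightedVDM, Set.setOf_forall_mem_eq_univ_pi]
  exact le_csSup ((isCompact_univ_pi fun _ => hK).bddAbove_image
    (continuous_weightedVDM e hQ).continuousOn) (Set.mem_image_of_mem _ hx)

theorem Zk_eq_setIntegral_sq_weightedVDM :
    Zk K ν Q k e = ∫ x in Set.univ.pi (fun _ => K), weightedVDM Q k e x ^ 2
      ∂Measure.pi fun _ => ν := by
  simp_rw [Zk, sq_weightedVDM, Set.setOf_forall_mem_eq_univ_pi]

theorem Zk_nonneg : 0 ≤ Zk K ν Q k e :=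
  integral_nonneg fun _ => by positivity

variable [IsFiniteMeasure ν]

theorem Zk_le_sq_supWeightedVDM_mul (hK : IsCompact K) (hQ : Continuous Q) :
    Zk K ν Q k e ≤ supWeightedVDM K Q k e ^ 2 * ν.real K ^ Nk n k := by
  have hbound : ∀ x ∈ Set.univ.pi (fun _ => K),
      ‖weightedVDM Q k e x ^ 2‖ ≤ supWeightedVDM K Q k e ^ 2 := fun x hx => by
    rw [Real.norm_of_nonneg (sq_nonneg _)]
    exact pow_le_pow_left₀ (weightedVDM_nonneg e x) (weightedVDM_le_supWeightedVDM e hK hQ hx) 2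
  calc Zk K ν Q k e ≤ ‖Zk K ν Q k e‖ := Real.le_norm_self _
    _ ≤ supWeightedVDM K Q k e ^ 2 * (Measure.pi fun _ => ν).real (Set.univ.pi fun _ => K) := by
      rw [Zk_eq_setIntegral_sq_weightedVDM]
      exact norm_setIntegral_le_of_norm_le_const (measure_lt_top _ _) hbound
    _ = supWeightedVDM K Q k e ^ 2 * ν.real K ^ Nk n k := by
      simp [measureReal_def, Measure.pi_pi]

theorem sq_supWeightedVDM_le_mul_Zk (hK : IsCompact K) (hQ : Continuous Q) {A : ℝ}
    (hA : BernsteinMarkovIneq K ν Q k A) :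
    supWeightedVDM K Q k e ^ 2 ≤ (A ^ 2) ^ Nk n k * Zk K ν Q k e := by
  have key := le_pow_card_mul_setIntegral_pi ν hK (f := fun x => weightedVDM Q k e x ^ 2)
    ((continuous_weightedVDM e hQ).pow 2)
    (fun _ => sq_nonneg _) (sq_nonneg A)
    fun x hx j => sq_weightedVDM_le_mul_setIntegral_update e hA hx j
  rw [Fintype.card_fin, ← Zk_eq_setIntegral_sq_weightedVDM] at key
  have hR : 0 ≤ (A ^ 2) ^ Nk n k * Zk K ν Q k e := mul_nonneg (by positivity) (Zk_nonneg e)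
  refine (Real.le_sqrt (supWeightedVDM_nonneg e) hR).1 (Real.sSup_le ?_ (Real.sqrt_nonneg _))
  rintro _ ⟨x, hx, rfl⟩
  exact Real.le_sqrt_of_sq_le (key x (Set.setOf_forall_mem_eq_univ_pi K ▸ hx))

end Bounds

section Exponents

variable {K : Set (Fin n → ℂ)} {Q : (Fin n → ℂ) → ℝ} {ν : Measure (Fin n → ℂ)} {k : ℕ}
  (e : Fin (Nk n k) ≃ {d : Fin n →₀ ℕ // (d.sum fun _ m => m) ≤ k})

theorem deltaQk_eq_sq_supWeightedVDM_rpow :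
    deltaQk K Q k e = (supWeightedVDM K Q k e ^ 2) ^
      (((n : ℝ) + 1) / (2 * (n : ℝ) * (k : ℝ) * (Nk n k : ℝ))) := by
  rw [show 2 * (n : ℝ) * k * Nk n k = (n * k * Nk n k) * (2 : ℕ) by push_cast; ring,
    Real.pow_rpow_div_mul (supWeightedVDM_nonneg e) two_ne_zero]
  rfl

variable [IsFiniteMeasure ν]

theorem Zk_rpow_le_rpow_mul_deltaQk (hK : IsCompact K) (hQ : Continuous Q) {a : ℝ}
    (ha : ν.real K ≤ a) :
    Zk K ν Q k e ^ (((n : ℝ) + 1) / (2 * (n : ℝ) * (k : ℝ) * (Nk n k : ℝ))) ≤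
      a ^ (((n : ℝ) + 1) / (2 * n) / k) * deltaQk K Q k e := by
  have ha0 : 0 ≤ a := measureReal_nonneg.trans ha
  calc Zk K ν Q k e ^ (((n : ℝ) + 1) / (2 * (n : ℝ) * (k : ℝ) * (Nk n k : ℝ)))
      ≤ (supWeightedVDM K Q k e ^ 2 * a ^ Nk n k) ^
          (((n : ℝ) + 1) / (2 * (n : ℝ) * (k : ℝ) * (Nk n k : ℝ))) := by
        refine Real.rpow_le_rpow (Zk_nonneg e) ?_ (by positivity)
        exact (Zk_le_sq_supWeightedVDM_mul e hK hQ).trans (by gcongr)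
    _ = a ^ (((n : ℝ) + 1) / (2 * n) / k) * deltaQk K Q k e := by
        rw [Real.mul_rpow (sq_nonneg _) (pow_nonneg ha0 _), ← deltaQk_eq_sq_supWeightedVDM_rpow,
          Real.pow_rpow_div_mul ha0 (Nk_pos n k).ne', div_div, mul_comm]

theorem deltaQk_le_rpow_mul_Zk_rpow (hK : IsCompact K) (hQ : Continuous Q) {A : ℝ}
    (hA : BernsteinMarkovIneq K ν Q k A) (hA0 : 0 ≤ A) :
    deltaQk K Q k e ≤ A ^ (((n : ℝ) + 1) / n / k) *
      Zk K ν Q k e ^ (((n : ℝ) + 1) / (2 * (n : ℝ) * (k : ℝ) * (Nk n k : ℝ))) := by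
  rw [deltaQk_eq_sq_supWeightedVDM_rpow]
  calc (supWeightedVDM K Q k e ^ 2) ^ (((n : ℝ) + 1) / (2 * (n : ℝ) * (k : ℝ) * (Nk n k : ℝ)))
      ≤ ((A ^ 2) ^ Nk n k * Zk K ν Q k e) ^
          (((n : ℝ) + 1) / (2 * (n : ℝ) * (k : ℝ) * (Nk n k : ℝ))) :=
        Real.rpow_le_rpow (sq_nonneg _) (sq_supWeightedVDM_le_mul_Zk e hK hQ hA) (by positivity)
    _ = A ^ (((n : ℝ) + 1) / n / k) *
          Zk K ν Q k e ^ (((n : ℝ) + 1) / (2 * (n : ℝ) * (k : ℝ) * (Nk n k : ℝ))) := by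
        rw [Real.mul_rpow (by positivity) (Zk_nonneg e),
          Real.pow_rpow_div_mul (sq_nonneg A) (Nk_pos n k).ne',
          show 2 * (n : ℝ) * k = (n * k) * (2 : ℕ) by push_cast; ring,
          Real.pow_rpow_div_mul hA0 two_ne_zero, div_div]

end Exponents

theorem tendsto_Zk_rpow_of_continuous {K : Set (Fin n → ℂ)} (hK : IsCompact K)
    {Q : (Fin n → ℂ) → ℝ} (hQ : Continuous Q) {ν : Measure (Fin n → ℂ)} [IsFiniteMeasure ν]
    (hBM : WeightedBernsteinMarkov K ν Q)
    (e : ∀ k : ℕ, Fin (Nk n k) ≃ {d : Fin n →₀ ℕ // (d.sum fun _ m => m) ≤ k}) {L : ℝ}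
    (hδ : Tendsto (fun k => deltaQk K Q k (e k)) atTop (𝓝 L)) :
    Tendsto (fun k => Zk K ν Q k (e k) ^
      (((n : ℝ) + 1) / (2 * (n : ℝ) * (k : ℝ) * (Nk n k : ℝ)))) atTop (𝓝 L) := by
  -- `max _ 1` keeps the base positive when `ν K = 0`.
  refine tendsto_of_le_mul_of_frequently_le_mul hδ
    (Real.tendsto_rpow_div_natCast_atTop (lt_max_of_lt_right one_pos) _)
    (Eventually.of_forall fun k => Zk_rpow_le_rpow_mul_deltaQk (e k) hK hQ
      (le_max_left (ν.real K) 1)) ?_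
  have hρ : Tendsto (fun ε : ℝ => (1 + ε) ^ (((n : ℝ) + 1) / n)) (𝓝[>] 0) (𝓝 1) := by
    have h : ContinuousAt (fun ε : ℝ => (1 + ε) ^ (((n : ℝ) + 1) / n)) 0 :=
      (continuousAt_const.add continuousAt_id).rpow_const (Or.inl (by norm_num))
    simpa using h.tendsto.mono_left nhdsWithin_le_nhds
  refine hρ.frequently (eventually_nhdsWithin_of_forall (s := Set.Ioi 0)
    fun ε (hε : 0 < ε) => ?_).frequently
  obtain ⟨C, hC, hCk⟩ := hBM ε hε
  exact ⟨_, Real.tendsto_mul_pow_rpow_div_natCast_atTop hC (by positivity) _,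
    (eventually_ge_atTop 1).mono fun k hk =>
      deltaQk_le_rpow_mul_Zk_rpow (e k) hK hQ (hCk k hk) (by positivity)⟩

section Congr

variable {K : Set (Fin n → ℂ)} {Q Q' : (Fin n → ℂ) → ℝ}

theorem supWeightedVDM_congr (h : Set.EqOn Q Q' K) {k : ℕ}
    (e : Fin (Nk n k) ≃ {d : Fin n →₀ ℕ // (d.sum fun _ m => m) ≤ k}) :
    supWeightedVDM K Q k e = supWeightedVDM K Q' k e := by
  unfold supWeightedVDM weightedVDM
  congr 1
  refine Set.image_congr fun x hx => ?_
  simp only [h (hx _)]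

theorem deltaQk_congr (h : Set.EqOn Q Q' K) {k : ℕ}
    (e : Fin (Nk n k) ≃ {d : Fin n →₀ ℕ // (d.sum fun _ m => m) ≤ k}) :
    deltaQk K Q k e = deltaQk K Q' k e :=
  congrArg (· ^ _) (supWeightedVDM_congr h e)

theorem Zk_congr (hK : MeasurableSet K) (h : Set.EqOn Q Q' K) (ν : Measure (Fin n → ℂ)) {k : ℕ}
    (e : Fin (Nk n k) ≃ {d : Fin n →₀ ℕ // (d.sum fun _ m => m) ≤ k}) :
    Zk K ν Q k e = Zk K ν Q' k e := by
  refine setIntegral_congr_fun ?_ fun x hx => ?_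
  · rw [Set.setOf_forall_mem_eq_univ_pi]
    exact .univ_pi fun _ => hK
  · simp only [h (hx _)]

theorem WeightedBernsteinMarkov.congr {ν : Measure (Fin n → ℂ)} (hK : MeasurableSet K)
    (h : Set.EqOn Q Q' K) (hQ : WeightedBernsteinMarkov K ν Q) :
    WeightedBernsteinMarkov K ν Q' := by
  intro ε hε
  obtain ⟨C, hC, hCk⟩ := hQ ε hε
  refine ⟨C, hC, fun k hk p hp z hz => ?_⟩
  have hI : ∫ w in K, ‖MvPolynomial.eval w p‖ ^ 2 * Real.exp (-Q w) ^ (2 * k) ∂ν =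
      ∫ w in K, ‖MvPolynomial.eval w p‖ ^ 2 * Real.exp (-Q' w) ^ (2 * k) ∂ν :=
    setIntegral_congr_fun hK fun w hw => by simp only [h hw]
  rw [← h hz, ← hI]
  exact hCk k hk p hp z hz

end Congr

theorem Zk_tendsto_weighted_transfinite_diameter_general
    (K : Set (Fin n → ℂ)) (hK : IsCompact K)
    (Q : (Fin n → ℂ) → ℝ) (hQ : ContinuousOn Q K)
    (ν : Measure (Fin n → ℂ)) [IsFiniteMeasure ν]
    (hBM : WeightedBernsteinMarkov K ν Q)
    (e : ∀ k : ℕ, Fin (Nk n k) ≃ {d : Fin n →₀ ℕ // (d.sum fun _ m => m) ≤ k})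
    (L : ℝ)
    (hδ : Tendsto (fun k => deltaQk K Q k (e k)) atTop (nhds L)) :
    Tendsto (fun k => Zk K ν Q k (e k) ^
      (((n : ℝ) + 1) / (2 * (n : ℝ) * (k : ℝ) * (Nk n k : ℝ)))) atTop (nhds L) := by
  obtain ⟨g, hg⟩ := ContinuousMap.exists_restrict_eq hK.isClosed ⟨K.domRestrict Q, hQ.domRestrict⟩
  have hgQ : Set.EqOn g Q K := fun z hz => DFunLike.congr_fun hg ⟨z, hz⟩
  have h := tendsto_Zk_rpow_of_continuous hK g.continuous
    (hBM.congr hK.measurableSet hgQ.symm) e (by simpa only [deltaQk_congr hgQ] using hδ)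
  simpa only [Zk_congr hK.measurableSet hgQ] using h

/-- Let `K ⊂ ℂ^n` be compact, `Q` continuous on `K`, and `(K, ν, Q)` satisfy the weighted
Bernstein–Markov property.  If `δ^{Q,k}(K) → L ≥ 0` as `k → ∞`, then
`Z_k^{(n+1)/(2 n k N_k)} → L` as `k → ∞`. -/
theorem Zk_tendsto_weighted_transfinite_diameter (hn : 1 ≤ n)
    (K : Set (Fin n → ℂ)) (hK : IsCompact K)
    (Q : (Fin n → ℂ) → ℝ) (hQ : ContinuousOn Q K)
    (ν : Measure (Fin n → ℂ)) [IsFiniteMeasure ν] (hν : ν Kᶜ = 0)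
    (hBM : WeightedBernsteinMarkov K ν Q)
    (e : ∀ k : ℕ, Fin (Nk n k) ≃ {d : Fin n →₀ ℕ // (d.sum fun _ m => m) ≤ k})
    (L : ℝ) (hL : 0 ≤ L)
    (hδ : Tendsto (fun k => deltaQk K Q k (e k)) atTop (nhds L)) :
    Tendsto (fun k => Zk K ν Q k (e k) ^
      (((n : ℝ) + 1) / (2 * (n : ℝ) * (k : ℝ) * (Nk n k : ℝ)))) atTop (nhds L) :=
  Zk_tendsto_weighted_transfinite_diameter_general K hK Q hQ ν hBM e L hδ
end

section
/- Let K ⊂ ℂ^n be an arbitrary nonempty compact set. Then there exists a finite Borel measure ν with support contained in K and a countable set E ⊆ K with ν(ℂ^n ∖ E) = 0 such that (K, ν) satisfies the Bernstein–Markov property. -/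
open MeasureTheory Matrix
open scoped ENNReal NNReal

/-- `(K, ν)` satisfies the Bernstein–Markov property in `ℂ^n`: for every `ε > 0` there is
`C > 0` such that for every `k ≥ 1` and every polynomial `p` of total degree at most `k`,
`sup_{z ∈ K} |p(z)| ≤ C (1+ε)^k (∫_K |p|² dν)^{1/2}`. -/
def BernsteinMarkov {n : ℕ} (K : Set (Fin n → ℂ)) (ν : Measure (Fin n → ℂ)) : Prop :=
  ∀ ε : ℝ, 0 < ε → ∃ C : ℝ, 0 < C ∧ ∀ k : ℕ, 1 ≤ k → ∀ p : MvPolynomial (Fin n) ℂ,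
    p.totalDegree ≤ k → ∀ z ∈ K,
      ‖MvPolynomial.eval z p‖ ≤
        C * (1 + ε) ^ k * Real.sqrt (∫ w in K, ‖MvPolynomial.eval w p‖ ^ 2 ∂ν)



lemma exists_det_ne_zero {κ : Type*} :
    ∀ (r : ℕ) (f : Fin r → (κ → ℂ)), LinearIndependent ℂ f →
      ∃ z : Fin r → κ, (Matrix.of fun i j => f i (z j)).det ≠ 0 := by
  intro r
  induction r with
  | zero =>
    intro f _
    exact ⟨fun i => i.elim0, by simp [Matrix.det_fin_zero]⟩
  | succ r ih =>
    intro f hf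
    have hg : LinearIndependent ℂ (f ∘ Fin.castSucc) :=
      hf.comp _ (Fin.castSucc_injective r)
    obtain ⟨z, hz⟩ := ih (f ∘ Fin.castSucc) hg
    set C : Fin (r + 1) → ℂ := fun i =>
      ((Matrix.of fun i' j' => f (i.succAbove i') (z j')).det) with hC
    have hClast : C (Fin.last r) ≠ 0 := by
      have he : (Matrix.of fun i' j' => f ((Fin.last r).succAbove i') (z j')) =
          (Matrix.of fun i' j' => (f ∘ Fin.castSucc) i' (z j')) := by
        ext i' j'
        simp [Fin.succAbove_last]
      simpa [hC, he] using hz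
    set c : Fin (r + 1) → ℂ := fun i => (-1 : ℂ) ^ ((i : ℕ) + (Fin.last r : ℕ)) * C i with hc
    have hexp : ∀ t : κ,
        (Matrix.of fun i j => f i ((Fin.snoc z t : Fin (r+1) → κ) j)).det = ∑ i, c i * f i t := by
      intro t
      rw [Matrix.det_succ_column (Matrix.of fun i j => f i ((Fin.snoc z t : Fin (r+1) → κ) j)) (Fin.last r)]
      refine Finset.sum_congr rfl fun i _ => ?_
      have hsub : ((Matrix.of fun i j => f i ((Fin.snoc z t : Fin (r+1) → κ) j)).submatrix i.succAbove
          (Fin.last r).succAbove) = (Matrix.of fun i' j' => f (i.succAbove i') (z j')) := by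
        ext i' j'
        simp [Matrix.submatrix_apply, Fin.succAbove_last]
      rw [hsub]
      simp only [Matrix.of_apply, Fin.snoc_last, hc, hC]
      ring
    by_contra h
    push_neg at h
    have hall : ∀ i, c i = 0 := by
      refine Fintype.linearIndependent_iff.mp hf c ?_
      funext t
      have := h (Fin.snoc z t)
      have h2 := (hexp t).symm.trans this
      simpa [Finset.sum_apply, Pi.smul_apply, smul_eq_mul] using h2
    have : c (Fin.last r) ≠ 0 := by
      exact mul_ne_zero (pow_ne_zero _ (by norm_num)) hClast
    exact this (hall _)

lemma fekete_lemma (n k : ℕ) (K : Set (Fin n → ℂ)) (hK : IsCompact K) (hKne : K.Nonempty) :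
    ∃ r : ℕ, r ≤ (k+1)^n ∧ ∃ w : Fin r → (Fin n → ℂ), (∀ j, w j ∈ K) ∧
      ∀ p : MvPolynomial (Fin n) ℂ, p.totalDegree ≤ k → ∀ z ∈ K,
        ‖MvPolynomial.eval z p‖ ≤ ∑ j, ‖MvPolynomial.eval (w j) p‖ := by
  haveI : CompactSpace K := isCompact_iff_compactSpace.mp hK
  haveI : Nonempty K := hKne.to_subtype
  set G : (Fin n → Fin (k+1)) → C(K, ℂ) := fun e =>
    ⟨fun z => ∏ i, (z : Fin n → ℂ) i ^ (e i : ℕ),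
      continuous_finset_prod _ fun i _ =>
        ((continuous_apply i).comp continuous_subtype_val).pow _⟩ with hG
  set V : Submodule ℂ C(K, ℂ) := Submodule.span ℂ (Set.range G) with hV
  haveI : FiniteDimensional ℂ V := FiniteDimensional.span_of_finite ℂ (Set.finite_range G)
  set r := Module.finrank ℂ V with hrdef
  have hr : r ≤ (k+1)^n := by
    classical
    have h0 : Set.range G = ((Finset.univ.image G : Finset C(K, ℂ)) : Set C(K, ℂ)) := by
      simp
    have h1 : r ≤ (Finset.univ.image G).card := by
      rw [hrdef, hV, h0]
      exact finrank_span_finset_le_card _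
    have h2 : (Finset.univ.image G).card ≤ Fintype.card (Fin n → Fin (k+1)) := by
      exact (Finset.card_image_le).trans (le_of_eq (Finset.card_univ))
    simpa [Fintype.card_fun] using h1.trans h2
  let b := Module.finBasis ℂ V
  set f : Fin r → C(K, ℂ) := fun i => (b i : C(K, ℂ)) with hf
  have hli : LinearIndependent ℂ (fun i => ((f i : C(K, ℂ)) : K → ℂ)) := by
    have h1 : LinearIndependent ℂ f :=
      b.linearIndependent.map' V.subtype (Submodule.ker_subtype V)
    exact h1.map' (ContinuousMap.coeFnLinearMap ℂ)
      (LinearMap.ker_eq_bot.mpr DFunLike.coe_injective)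
  obtain ⟨z0, hz0⟩ := exists_det_ne_zero r _ hli
  set Φ : (Fin r → K) → ℝ := fun z => ‖(Matrix.of fun i j => f i (z j)).det‖ with hΦ
  have hcont : Continuous Φ := by
    apply Continuous.norm
    apply Continuous.matrix_det
    exact continuous_matrix fun i j => (f i).continuous.comp (continuous_apply j)
  obtain ⟨zs, -, hzs'⟩ := isCompact_univ.exists_isMaxOn Set.univ_nonempty hcont.continuousOn
  have hzs : ∀ y, Φ y ≤ Φ zs := fun y => hzs' (Set.mem_univ y)
  set M : Matrix (Fin r) (Fin r) ℂ := Matrix.of fun i j => f i (zs j) with hM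
  have hMdet : M.det ≠ 0 := by
    intro h0
    have h1 : Φ z0 ≤ Φ zs := hzs z0
    rw [hΦ] at h1
    simp only [← hM, h0, norm_zero] at h1
    exact hz0 (by simpa using norm_le_zero_iff.mp h1)
  have hMpos : 0 < ‖M.det‖ := norm_pos_iff.mpr hMdet
  -- main interpolation bound
  have main : ∀ v : C(K, ℂ), v ∈ V → ∀ t : K, ‖v t‖ ≤ ∑ j, ‖v (zs j)‖ := by
    intro v hv t
    have hspan : Submodule.span ℂ (Set.range f) = V := by
      have : Set.range f = V.subtype '' Set.range ⇑b := by
        rw [← Set.range_comp]; rfl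
      rw [this, Submodule.span_image, b.span_eq, Submodule.map_subtype_top]
    obtain ⟨c, hcv⟩ := (Submodule.mem_span_range_iff_exists_fun ℂ).mp (hspan ▸ hv)
    set ρ : Fin r → ℂ := fun i => f i t with hρ
    have happ : ∀ s : K, v s = ∑ i, c i * f i s := by
      intro s
      have := congrArg (fun g : C(K, ℂ) => g s) hcv
      simpa using this.symm
    have hvz : (fun j => v (zs j)) = Mᵀ *ᵥ c := by
      funext j
      rw [happ]
      simp [Matrix.mulVec, dotProduct, hM, mul_comm]
    have hident' : ∑ j, Matrix.cramer M ρ j * v (zs j) = M.det * v t := by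
      calc ∑ j, Matrix.cramer M ρ j * v (zs j)
          = Matrix.cramer M ρ ⬝ᵥ (Mᵀ *ᵥ c) := by rw [← hvz]; rfl
        _ = (M *ᵥ Matrix.cramer M ρ) ⬝ᵥ c := by
            rw [Matrix.dotProduct_mulVec, Matrix.vecMul_transpose]
        _ = (M.det • ρ) ⬝ᵥ c := by rw [Matrix.mulVec_cramer]
        _ = M.det * v t := by
            rw [happ]
            simp only [smul_dotProduct, dotProduct, smul_eq_mul,
              Finset.mul_sum, hρ]
            exact Finset.sum_congr rfl fun i _ => by
              simp only [Pi.smul_apply, smul_eq_mul]; ring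
    have hident : M.det * v t = ∑ j, Matrix.cramer M ρ j * v (zs j) := hident'.symm
    have hnorm : ∀ j, ‖Matrix.cramer M ρ j‖ ≤ ‖M.det‖ := by
      intro j
      have hcr : Matrix.cramer M ρ j =
          (Matrix.of fun i j' => f i ((Function.update zs j t) j')).det := by
        rw [Matrix.cramer_apply]
        congr 1
        ext i j'
        by_cases hjj : j' = j <;>
          simp [Matrix.updateCol_apply, Function.update_apply, hjj, hM, hρ]
      rw [hcr]
      exact hzs (Function.update zs j t)
    have hchain : ‖M.det‖ * ‖v t‖ ≤ ‖M.det‖ * ∑ j, ‖v (zs j)‖ := by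
      calc ‖M.det‖ * ‖v t‖ = ‖M.det * v t‖ := (norm_mul _ _).symm
        _ = ‖∑ j, Matrix.cramer M ρ j * v (zs j)‖ := by rw [hident]
        _ ≤ ∑ j, ‖Matrix.cramer M ρ j * v (zs j)‖ := norm_sum_le _ _
        _ ≤ ∑ j, ‖M.det‖ * ‖v (zs j)‖ := by
            refine Finset.sum_le_sum fun j _ => ?_
            rw [norm_mul]
            exact mul_le_mul_of_nonneg_right (hnorm j) (norm_nonneg _)
        _ = ‖M.det‖ * ∑ j, ‖v (zs j)‖ := (Finset.mul_sum _ _ _).symm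
    exact le_of_mul_le_mul_left hchain hMpos
  refine ⟨r, hr, fun j => (zs j : Fin n → ℂ), fun j => (zs j).2, ?_⟩
  intro p hp z hz
  have hdle : ∀ d ∈ p.support, ∀ i, d i ≤ k := by
    intro d hd i
    have h1 : d i ≤ d.sum fun _ e => e := by
      by_cases h : i ∈ d.support
      · exact Finset.single_le_sum (f := fun i => d i) (fun _ _ => Nat.zero_le _) h
      · simp [Finsupp.notMem_support_iff.mp h]
    exact h1.trans ((MvPolynomial.le_totalDegree hd).trans hp)
  set vp : C(K, ℂ) := ∑ d ∈ p.support, MvPolynomial.coeff d p •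
      G (fun i => (⟨min (d i) k, Nat.lt_succ_of_le (min_le_right _ _)⟩ : Fin (k+1))) with hvp
  have hvpV : vp ∈ V := by
    exact Submodule.sum_mem _ fun d _ =>
      Submodule.smul_mem _ _ (Submodule.subset_span ⟨_, rfl⟩)
  have hvpeval : ∀ t : K, vp t = MvPolynomial.eval (t : Fin n → ℂ) p := by
    intro t
    rw [hvp, MvPolynomial.eval_eq']
    simp only [ContinuousMap.coe_sum, Finset.sum_apply, ContinuousMap.coe_smul, Pi.smul_apply,
      smul_eq_mul, hG, ContinuousMap.coe_mk]
    refine Finset.sum_congr rfl fun d hd => ?_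
    congr 1
    refine Finset.prod_congr rfl fun i _ => ?_
    congr 1
    exact min_eq_left (hdle d hd i)
  have := main vp hvpV ⟨z, hz⟩
  rw [hvpeval ⟨z, hz⟩] at this
  refine this.trans (le_of_eq ?_)
  exact Finset.sum_congr rfl fun j _ => by rw [hvpeval (zs j)]

/-- Every nonempty compact set `K ⊂ ℂ^n` admits a finite measure `ν` supported in `K`,
carried by a countable subset `E` of `K`, such that `(K, ν)` satisfies the
Bernstein–Markov property. -/
theorem exists_countably_carried_bernstein_markov_measure {n : ℕ}
    (K : Set (Fin n → ℂ)) (hK : IsCompact K) (hKne : K.Nonempty) :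
    ∃ ν : Measure (Fin n → ℂ), IsFiniteMeasure ν ∧ ν Kᶜ = 0 ∧
      (∃ E : Set (Fin n → ℂ), E.Countable ∧ E ⊆ K ∧ ν Eᶜ = 0) ∧
      BernsteinMarkov K ν := by
  classical
  choose R hR W hW hbound using fun k => fekete_lemma n k K hK hKne
  set c : ℕ → ℝ≥0∞ := fun k => (((k : ℝ≥0∞) + 1) ^ (n + 2))⁻¹ with hc
  have hbase_ne : ∀ k : ℕ, ((k : ℝ≥0∞) + 1) ≠ 0 := fun k => by simp
  have hbase_top : ∀ k : ℕ, ((k : ℝ≥0∞) + 1) ≠ ⊤ := fun k => by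
    simp [ENNReal.add_eq_top]
  have hc0 : ∀ k : ℕ, c k ≠ 0 := fun k => by
    simp [hc, ENNReal.pow_eq_top_iff, hbase_top k]
  have hctop : ∀ k : ℕ, c k ≠ ⊤ := fun k => by
    simp [hc, pow_eq_zero_iff, hbase_ne k]
  set block : ℕ → Measure (Fin n → ℂ) := fun k => ∑ j : Fin (R k), Measure.dirac (W k j)
    with hblock
  set ν : Measure (Fin n → ℂ) := Measure.sum (fun k => c k • block k) with hν
  have hKm : MeasurableSet K := hK.isClosed.measurableSet
  have hblock_apply : ∀ k (s : Set (Fin n → ℂ)), block k s = ∑ j : Fin (R k),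
      Measure.dirac (W k j) s := fun k s => Measure.finset_sum_apply _ _ _
  have hblock_univ : ∀ k, block k Set.univ = R k := by
    intro k
    rw [hblock_apply]
    simp
  -- finiteness of the total mass
  have hck_bound : ∀ k, c k * block k Set.univ ≤ ((((k : ℝ≥0∞) + 1)) ^ 2)⁻¹ := by
    intro k
    rw [hblock_univ]
    have h1 : (R k : ℝ≥0∞) ≤ ((k : ℝ≥0∞) + 1) ^ n := by
      have := hR k
      have h2 : ((R k : ℕ) : ℝ≥0∞) ≤ (((k + 1) ^ n : ℕ) : ℝ≥0∞) := by
        exact_mod_cast Nat.cast_le.mpr this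
      simpa [Nat.cast_pow] using h2
    have hkey : (((((k : ℝ≥0∞) + 1) ^ (n + 2))⁻¹ : ℝ≥0∞)) * ((k : ℝ≥0∞) + 1) ^ n =
        ((((k : ℝ≥0∞) + 1)) ^ 2)⁻¹ := by
      rw [pow_add, ENNReal.mul_inv (Or.inl (pow_ne_zero _ (hbase_ne k)))
        (Or.inl (ENNReal.pow_ne_top (hbase_top k)))]
      rw [mul_comm ((((k : ℝ≥0∞) + 1) ^ n)⁻¹) _, mul_assoc,
        ENNReal.inv_mul_cancel (pow_ne_zero _ (hbase_ne k))
        (ENNReal.pow_ne_top (hbase_top k)), mul_one]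
    calc c k * (R k : ℝ≥0∞) ≤ c k * ((k : ℝ≥0∞) + 1) ^ n :=
          mul_le_mul_right h1 _
      _ = ((((k : ℝ≥0∞) + 1)) ^ 2)⁻¹ := hkey
  have hsum_fin : (∑' k : ℕ, ((((k : ℝ≥0∞) + 1)) ^ 2)⁻¹) ≠ ⊤ := by
    have hco : ∀ k : ℕ, ((((k : ℝ≥0∞) + 1)) ^ 2)⁻¹ =
        ((((((k : ℝ≥0) + 1)) ^ 2)⁻¹ : ℝ≥0) : ℝ≥0∞) := by
      intro k
      rw [ENNReal.coe_inv (by positivity), ENNReal.coe_pow]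
      push_cast
      rfl
    rw [tsum_congr hco, ENNReal.tsum_coe_ne_top_iff_summable, ← NNReal.summable_coe]
    have hs : Summable fun k : ℕ => 1 / ((k : ℝ) + 1) ^ 2 := by
      have h4 := (summable_nat_add_iff (f := fun m : ℕ => 1 / (m : ℝ) ^ 2) 1).mpr
        (Real.summable_one_div_nat_pow.mpr one_lt_two)
      refine h4.congr fun k => ?_
      push_cast
      ring
    refine hs.congr fun k => ?_
    push_cast
    ring
  have hν_univ : ν Set.univ ≠ ⊤ := by
    rw [hν, Measure.sum_apply _ MeasurableSet.univ]
    refine ne_top_of_le_ne_top hsum_fin (ENNReal.tsum_le_tsum fun k => ?_)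
    rw [Measure.smul_apply, smul_eq_mul]
    exact hck_bound k
  haveI hνfin : IsFiniteMeasure ν := ⟨lt_top_iff_ne_top.mpr hν_univ⟩
  -- vanishing outside the atoms
  have hnull : ∀ s : Set (Fin n → ℂ), MeasurableSet s → (∀ k j, W k j ∉ s) → ν s = 0 := by
    intro s hs h
    rw [hν, Measure.sum_apply _ hs]
    have hb : ∀ k, block k s = 0 := by
      intro k
      rw [hblock_apply]
      refine Finset.sum_eq_zero fun j _ => ?_
      rw [Measure.dirac_apply' _ hs]
      simp [Set.indicator_of_notMem (h k j)]
    simp [Measure.smul_apply, hb]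
  have hKc : ν Kᶜ = 0 := hnull Kᶜ hKm.compl (fun k j h => h (hW k j))
  set E : Set (Fin n → ℂ) := ⋃ k, Set.range (W k) with hE
  have hEc : E.Countable := Set.countable_iUnion fun k => (Set.finite_range (W k)).countable
  have hEK : E ⊆ K := by
    rw [hE]
    exact Set.iUnion_subset fun k x ⟨j, hj⟩ => hj ▸ hW k j
  have hEnull : ν Eᶜ = 0 := by
    refine hnull Eᶜ hEc.measurableSet.compl fun k j h => h ?_
    exact Set.mem_iUnion.mpr ⟨k, ⟨j, rfl⟩⟩
  refine ⟨ν, hνfin, hKc, ⟨E, hEc, hEK, hEnull⟩, ?_⟩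
  -- the integral lower bound
  have hint : ∀ (k : ℕ) (p : MvPolynomial (Fin n) ℂ),
      (c k).toReal * ∑ j, ‖MvPolynomial.eval (W k j) p‖ ^ 2 ≤
        ∫ w in K, ‖MvPolynomial.eval w p‖ ^ 2 ∂ν := by
    intro k p
    set g : (Fin n → ℂ) → ℝ := fun w => ‖MvPolynomial.eval w p‖ ^ 2 with hg
    have hgc : Continuous g := ((MvPolynomial.continuous_eval p).norm).pow 2
    have hgnn : ∀ w, 0 ≤ g w := fun w => by positivity
    have hgm : Measurable fun w => ENNReal.ofReal (g w) := hgc.measurable.ennreal_ofReal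
    set L : ℝ≥0∞ := ∫⁻ w in K, ENNReal.ofReal (g w) ∂ν with hL
    -- L is finite
    obtain ⟨x0, -, hx0⟩ := hK.exists_isMaxOn hKne hgc.continuousOn
    have hLfin : L ≠ ⊤ := by
      have h1 : L ≤ ∫⁻ _ in K, ENNReal.ofReal (g x0) ∂ν := by
        refine setLIntegral_mono measurable_const fun x hx => ?_
        exact ENNReal.ofReal_le_ofReal (hx0 hx)
      rw [setLIntegral_const] at h1
      refine ne_top_of_le_ne_top ?_ h1
      exact ENNReal.mul_ne_top ENNReal.ofReal_ne_top
        (ne_top_of_le_ne_top hν_univ (measure_mono (Set.subset_univ K)))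
    -- identification of the Bochner integral
    have hIeq : ∫ w in K, g w ∂ν = L.toReal := by
      rw [integral_eq_lintegral_of_nonneg_ae (Filter.Eventually.of_forall hgnn)
        hgc.aestronglyMeasurable]
    -- restriction of the block to K
    have hbr : (block k).restrict K = block k := by
      ext s hs
      rw [Measure.restrict_apply hs, hblock_apply, hblock_apply]
      refine Finset.sum_congr rfl fun j _ => ?_
      rw [Measure.dirac_apply' _ (hs.inter hKm), Measure.dirac_apply' _ hs]
      by_cases hx : W k j ∈ s <;> simp [Set.indicator, hx, hW k j]
    -- lower bound for L
    have hlow : c k * ∑ j, ENNReal.ofReal (g (W k j)) ≤ L := by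
      have h1 : (c k • block k).restrict K ≤ ν.restrict K :=
        Measure.restrict_mono (le_refl _) (Measure.le_sum _ k)
      have h2 : ∫⁻ w in K, ENNReal.ofReal (g w) ∂(c k • block k) ≤ L :=
        lintegral_mono' h1 (le_refl _)
      refine le_trans (le_of_eq ?_) h2
      rw [Measure.restrict_smul, lintegral_smul_measure, hbr,
        lintegral_finset_sum_measure]
      congr 1
      exact Finset.sum_congr rfl fun j _ => (lintegral_dirac' _ hgm).symm
    -- pass to real numbers
    have h3 : (c k * ∑ j, ENNReal.ofReal (g (W k j))).toReal ≤ L.toReal :=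
      ENNReal.toReal_mono hLfin hlow
    rw [ENNReal.toReal_mul, ENNReal.toReal_sum (fun j _ => ENNReal.ofReal_ne_top)] at h3
    simp only [ENNReal.toReal_ofReal (hgnn _)] at h3
    rw [hIeq]
    exact h3
  -- toReal of the weights
  have hcR : ∀ k : ℕ, (c k).toReal = (((k : ℝ) + 1) ^ (n + 2))⁻¹ := by
    intro k
    rw [hc]
    simp only [ENNReal.toReal_inv, ENNReal.toReal_pow,
      ENNReal.toReal_add (ENNReal.natCast_ne_top k) ENNReal.one_ne_top]
    simp
  have hcRpos : ∀ k : ℕ, 0 < (c k).toReal := by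
    intro k
    rw [hcR]
    positivity
  -- the Bernstein-Markov property
  intro ε hε
  have h1ε : (1 : ℝ) < 1 + ε := by linarith
  set a : ℕ → ℝ := fun k => ((k : ℝ) + 1) ^ (n + 1) / (1 + ε) ^ k with ha
  have hatend : Filter.Tendsto a Filter.atTop (nhds 0) := by
    have h0 : Filter.Tendsto (fun m : ℕ => (m : ℝ) ^ (n + 1) / (1 + ε) ^ m)
        Filter.atTop (nhds 0) := tendsto_pow_const_div_const_pow_of_one_lt (n + 1) h1ε
    have h1 : Filter.Tendsto (fun k : ℕ => ((k + 1 : ℕ) : ℝ) ^ (n + 1) / (1 + ε) ^ (k + 1))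
        Filter.atTop (nhds 0) := h0.comp (Filter.tendsto_add_atTop_nat 1)
    have h2 : Filter.Tendsto (fun k : ℕ => (1 + ε) * (((k + 1 : ℕ) : ℝ) ^ (n + 1) /
        (1 + ε) ^ (k + 1))) Filter.atTop (nhds ((1 + ε) * 0)) := h1.const_mul _
    rw [mul_zero] at h2
    refine h2.congr fun k => ?_
    rw [ha]
    push_cast
    rw [pow_succ]
    field_simp
    ring
  obtain ⟨C0, hC0⟩ := hatend.bddAbove_range
  set C : ℝ := max C0 1 with hCdef
  have hCpos : (0 : ℝ) < C := lt_of_lt_of_le one_pos (le_max_right _ _)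
  have haC : ∀ k, a k ≤ C := fun k =>
    le_trans (hC0 (Set.mem_range_self k)) (le_max_left _ _)
  refine ⟨C, hCpos, ?_⟩
  intro k hk1 p hp z hz
  set I : ℝ := ∫ w in K, ‖MvPolynomial.eval w p‖ ^ 2 ∂ν with hI
  have hInn : 0 ≤ I := by
    rw [hI]
    exact integral_nonneg fun w => by positivity
  set x : Fin (R k) → ℝ := fun j => ‖MvPolynomial.eval (W k j) p‖ with hx
  have hxnn : ∀ j, 0 ≤ x j := fun j => norm_nonneg _
  have hsq : (∑ j, x j) ^ 2 ≤ (R k : ℝ) * ∑ j, x j ^ 2 := by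
    have := sq_sum_le_card_mul_sum_sq (s := (Finset.univ : Finset (Fin (R k)))) (f := x)
    simpa using this
  have hsum_sq : ∑ j, x j ^ 2 ≤ ((c k).toReal)⁻¹ * I := by
    have h1 := hint k p
    rw [← hI] at h1
    calc ∑ j, x j ^ 2 = ((c k).toReal)⁻¹ * ((c k).toReal * ∑ j, x j ^ 2) := by
          rw [← mul_assoc, inv_mul_cancel₀ (ne_of_gt (hcRpos k)), one_mul]
      _ ≤ ((c k).toReal)⁻¹ * I :=
          mul_le_mul_of_nonneg_left h1 (inv_nonneg.mpr (le_of_lt (hcRpos k)))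
  have hstep1 : ‖MvPolynomial.eval z p‖ ≤ ∑ j, x j := hbound k p hp z hz
  have hstep2 : ∑ j, x j ≤ Real.sqrt ((R k : ℝ) * (((c k).toReal)⁻¹ * I)) := by
    have h2 : (∑ j, x j) ^ 2 ≤ (R k : ℝ) * (((c k).toReal)⁻¹ * I) :=
      hsq.trans (mul_le_mul_of_nonneg_left hsum_sq (Nat.cast_nonneg _))
    have h3 := Real.sqrt_le_sqrt h2
    rwa [Real.sqrt_sq (Finset.sum_nonneg fun j _ => hxnn j)] at h3
  have hfac : (R k : ℝ) * ((c k).toReal)⁻¹ ≤ ((((k : ℝ) + 1)) ^ (n + 1)) ^ 2 := by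
    rw [hcR, inv_inv]
    have h1 : (R k : ℝ) ≤ ((k : ℝ) + 1) ^ n := by exact_mod_cast hR k
    calc (R k : ℝ) * ((k : ℝ) + 1) ^ (n + 2)
        ≤ ((k : ℝ) + 1) ^ n * ((k : ℝ) + 1) ^ (n + 2) :=
          mul_le_mul_of_nonneg_right h1 (by positivity)
      _ = ((((k : ℝ) + 1)) ^ (n + 1)) ^ 2 := by ring
  have hmain : ‖MvPolynomial.eval z p‖ ≤ ((k : ℝ) + 1) ^ (n + 1) * Real.sqrt I := by
    refine hstep1.trans (hstep2.trans ?_)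
    rw [← mul_assoc, Real.sqrt_mul (by positivity : (0:ℝ) ≤ (R k : ℝ) * ((c k).toReal)⁻¹) I]
    refine mul_le_mul_of_nonneg_right ?_ (Real.sqrt_nonneg _)
    calc Real.sqrt ((R k : ℝ) * ((c k).toReal)⁻¹)
        ≤ Real.sqrt (((((k : ℝ) + 1)) ^ (n + 1)) ^ 2) := Real.sqrt_le_sqrt hfac
      _ = ((k : ℝ) + 1) ^ (n + 1) := Real.sqrt_sq (by positivity)
  have hak : ((k : ℝ) + 1) ^ (n + 1) = a k * (1 + ε) ^ k := by
    rw [ha]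
    field_simp
  calc ‖MvPolynomial.eval z p‖ ≤ ((k : ℝ) + 1) ^ (n + 1) * Real.sqrt I := hmain
    _ = a k * (1 + ε) ^ k * Real.sqrt I := by rw [hak]
    _ ≤ C * (1 + ε) ^ k * Real.sqrt I := by
        refine mul_le_mul_of_nonneg_right
          (mul_le_mul_of_nonneg_right (haC k) (by positivity)) (Real.sqrt_nonneg _)
end

section
/- Let K ⊂ ℂ^n be compact and suppose for each k ≥ 1 there is a finite set A_k ⊆ K and a constant C_k ≥ 1 such that sup_{z ∈ K} |p(z)| ≤ C_k max_{a ∈ A_k} |p(a)| for every polynomial p of degree at most k, and suppose both C_k and the cardinality of A_k grow at most polynomially in k (i.e., there exist C, s > 0 with C_k + card(A_k) ≤ C k^s for all k ≥ 1). Then there exists a finite Borel measure ν with support contained in K, with ν(ℂ^n ∖ ⋃_k A_k) = 0, such that (K, ν) satisfies the Bernstein–Markov property. -/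
open MeasureTheory

/-!
Put the mass `k^(-2(m+1))` at every point of `A_k`, where `m = ⌈s⌉`, so that
`C_k, #A_k ≤ C k^m` (testing the mesh inequality on `p = 1` gives `C_k ≥ 1`). The total mass is
at most `∑ C k^m / k^(2m+2) < ∞`, and since every `a ∈ A_k` carries mass at least
`k^(-2(m+1))`, `|p(a)| ≤ k^(m+1) ‖p‖_{L²(ν)}`. Hence
`sup_K |p| ≤ C_k max_{A_k} |p| ≤ C k^(2m+1) ‖p‖_{L²(ν)}`, and `(1 + ε)^k` absorbs the
polynomial factor.
-/

lemma exists_pow_le_mul_pow_of_one_lt (t : ℕ) {r : ℝ} (hr : 1 < r) :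
    ∃ D : ℝ, 0 < D ∧ ∀ k : ℕ, (k : ℝ) ^ t ≤ D * r ^ k := by
  obtain ⟨B, hB⟩ := (tendsto_pow_const_div_const_pow_of_one_lt t hr).bddAbove_range
  refine ⟨max B 1, by positivity, fun k => ?_⟩
  have hpos : (0 : ℝ) < r ^ k := by positivity
  rw [← div_le_iff₀ hpos]
  exact (hB (Set.mem_range_self k)).trans (le_max_left _ _)

lemma rpow_le_pow_natCeil {x : ℝ} (hx : 1 ≤ x) (s : ℝ) : x ^ s ≤ x ^ ⌈s⌉₊ := by
  rw [← Real.rpow_natCast]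
  exact Real.rpow_le_rpow_of_exponent_le hx (Nat.le_ceil s)

lemma summable_inv_pow_sq_mul_of_le_mul_pow {m : ℕ} {C : ℝ} {a : ℕ → ℝ} (ha0 : ∀ k, 0 ≤ a k)
    (ha : ∀ k, 1 ≤ k → a k ≤ C * (k : ℝ) ^ m) :
    Summable fun j : ℕ => ((((j + 1 : ℕ) : ℝ) ^ (m + 1))⁻¹ ^ 2 * a (j + 1)) := by
  have hinv_sq : Summable fun j : ℕ => C * (((j + 1 : ℕ) : ℝ) ^ 2)⁻¹ :=
    ((summable_nat_add_iff 1).mpr (Real.summable_nat_pow_inv.mpr one_lt_two)).mul_left C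
  refine hinv_sq.of_nonneg_of_le (fun j => mul_nonneg (by positivity) (ha0 _)) fun j => ?_
  set x : ℝ := ((j + 1 : ℕ) : ℝ)
  have hx : 1 ≤ x := by simp [x]
  calc (x ^ (m + 1))⁻¹ ^ 2 * a (j + 1) ≤ (x ^ (m + 1))⁻¹ ^ 2 * (C * x ^ m) := by
        gcongr; exact ha _ j.succ_pos
    _ = C * (x ^ (m + 2))⁻¹ := by field_simp; ring
    _ ≤ C * (x ^ 2)⁻¹ := by
        have hC : 0 ≤ C := by
          have := (ha0 (j + 1)).trans (ha _ j.succ_pos)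
          exact nonneg_of_mul_nonneg_left this (by positivity)
        gcongr
        omega

section MeshMeasure

variable {X : Type*} [MeasurableSpace X] (A : ℕ → Finset X) (w : ℕ → ℝ)

noncomputable def meshMeasure : Measure X :=
  Measure.sum fun k => ENNReal.ofReal (w k) • ∑ a ∈ A k, Measure.dirac a

variable [MeasurableSingletonClass X]

lemma meshMeasure_apply (s : Set X) :
    meshMeasure A w s = ∑' k, ENNReal.ofReal (w k) * ∑ a ∈ A k, s.indicator 1 a := by
  simp [meshMeasure, Measure.sum_apply_of_countable, Measure.finsetSum_apply,
    Measure.dirac_apply]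

lemma meshMeasure_compl_eq_zero {s : Set X} (hs : ∀ k, (A k : Set X) ⊆ s) :
    meshMeasure A w sᶜ = 0 := by
  rw [meshMeasure_apply]
  refine ENNReal.tsum_eq_zero.mpr fun k => ?_
  rw [Finset.sum_eq_zero fun a ha =>
    Set.indicator_of_notMem (Set.notMem_compl_iff.mpr (hs k ha)) _, mul_zero]

lemma ofReal_le_meshMeasure_singleton {k : ℕ} {a : X} (ha : a ∈ A k) :
    ENNReal.ofReal (w k) ≤ meshMeasure A w {a} := by
  rw [meshMeasure_apply]
  refine le_trans ?_ (ENNReal.le_tsum k)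
  calc ENNReal.ofReal (w k) = ENNReal.ofReal (w k) * ({a} : Set X).indicator 1 a := by simp
    _ ≤ _ := by
      gcongr
      exact Finset.single_le_sum (f := fun b => ({a} : Set X).indicator 1 b)
        (fun b _ => zero_le) ha

lemma le_meshMeasure_real_singleton [IsFiniteMeasure (meshMeasure A w)] {k : ℕ} {a : X}
    (ha : a ∈ A k) : w k ≤ (meshMeasure A w).real {a} :=
  calc w k ≤ (ENNReal.ofReal (w k)).toReal := by
        rw [ENNReal.toReal_ofReal']; exact le_max_left _ _
    _ ≤ (meshMeasure A w).real {a} :=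
        ENNReal.toReal_mono (measure_ne_top _ _) (ofReal_le_meshMeasure_singleton A w ha)

lemma isFiniteMeasure_meshMeasure (hw : ∀ k, 0 ≤ w k)
    (hsum : Summable fun k => w k * (A k).card) : IsFiniteMeasure (meshMeasure A w) := by
  refine ⟨?_⟩
  have huniv : meshMeasure A w Set.univ = ∑' k, ENNReal.ofReal (w k * (A k).card) := by
    simp [meshMeasure_apply, ENNReal.ofReal_mul (hw _)]
  rw [huniv, ← ENNReal.ofReal_tsum_of_nonneg (fun k => by have := hw k; positivity) hsum]
  exact ENNReal.ofReal_lt_top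

end MeshMeasure

section PointEvaluation

variable {X : Type*} [MeasurableSpace X] [MeasurableSingletonClass X] {ν : Measure X}
  {K : Set X}

lemma measureReal_singleton_mul_le_setIntegral {f : X → ℝ} (hf : IntegrableOn f K ν)
    (hf0 : 0 ≤ f) {a : X} (ha : a ∈ K) : ν.real {a} * f a ≤ ∫ x in K, f x ∂ν :=
  calc ν.real {a} * f a = ∫ x in {a}, f x ∂ν := by rw [integral_singleton, smul_eq_mul]
    _ ≤ ∫ x in K, f x ∂ν :=
      setIntegral_mono_set hf (ae_of_all _ hf0) (Set.singleton_subset_iff.mpr ha).eventuallyLE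

variable {E : Type*} [NormedAddCommGroup E] {f : X → E}

lemma norm_le_sqrt_setIntegral_div_sqrt (hf : IntegrableOn (fun x => ‖f x‖ ^ 2) K ν)
    {a : X} (ha : a ∈ K) {w : ℝ} (hw : 0 < w) (hwa : w ≤ ν.real {a}) :
    ‖f a‖ ≤ √(∫ x in K, ‖f x‖ ^ 2 ∂ν) / √w := by
  have hmass : w * ‖f a‖ ^ 2 ≤ ∫ x in K, ‖f x‖ ^ 2 ∂ν :=
    (mul_le_mul_of_nonneg_right hwa (by positivity)).trans
      (measureReal_singleton_mul_le_setIntegral hf (fun x => by positivity) ha)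
  rw [← Real.sqrt_div' _ hw.le, Real.le_sqrt (norm_nonneg _) (by positivity), le_div_iff₀ hw]
  linarith

lemma sSup_norm_image_le_sqrt_setIntegral_div_sqrt
    (hf : IntegrableOn (fun x => ‖f x‖ ^ 2) K ν) {S : Set X} (hSK : S ⊆ K) {w : ℝ} (hw : 0 < w)
    (hwS : ∀ a ∈ S, w ≤ ν.real {a}) :
    sSup ((fun a => ‖f a‖) '' S) ≤ √(∫ x in K, ‖f x‖ ^ 2 ∂ν) / √w :=
  Real.sSup_le
    (by rintro _ ⟨a, ha, rfl⟩; exact norm_le_sqrt_setIntegral_div_sqrt hf (hSK ha) hw (hwS a ha))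
    (by positivity)

end PointEvaluation

section NormingSet

variable {n : ℕ}

def IsNormingSet (K S : Set (Fin n → ℂ)) (k : ℕ) (c : ℝ) : Prop :=
  ∀ p : MvPolynomial (Fin n) ℂ, p.totalDegree ≤ k → ∀ z ∈ K,
    ‖MvPolynomial.eval z p‖ ≤ c * sSup ((fun a => ‖MvPolynomial.eval a p‖) '' S)

lemma IsNormingSet.one_le {K S : Set (Fin n → ℂ)} {k : ℕ} {c : ℝ} (h : IsNormingSet K S k c)
    (hK : K.Nonempty) : 1 ≤ c := by
  obtain ⟨z, hz⟩ := hK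
  have hone := h 1 (by simp) z hz
  simp only [map_one, norm_one] at hone
  have hsup_le : sSup ((fun _ => (1 : ℝ)) '' S) ≤ 1 :=
    Real.sSup_le (by rintro _ ⟨_, _, rfl⟩; rfl) zero_le_one
  have hsup_nonneg : 0 ≤ sSup ((fun _ => (1 : ℝ)) '' S) :=
    Real.sSup_nonneg (by rintro _ ⟨_, _, rfl⟩; exact zero_le_one)
  rcases le_or_gt 0 c with hc | hc
  · linarith [mul_le_mul_of_nonneg_left hsup_le hc]
  · linarith [mul_nonpos_of_nonpos_of_nonneg hc.le hsup_nonneg]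

theorem bernsteinMarkov_of_isNormingSet {K : Set (Fin n → ℂ)} (hK : IsCompact K)
    {ν : Measure (Fin n → ℂ)} [IsFiniteMeasureOnCompacts ν] {A : ℕ → Set (Fin n → ℂ)}
    {c w : ℕ → ℝ} (hAK : ∀ k, 1 ≤ k → A k ⊆ K)
    (hnorming : ∀ k, 1 ≤ k → IsNormingSet K (A k) k (c k))
    (hw : ∀ k, 1 ≤ k → 0 < w k) (hwA : ∀ k, 1 ≤ k → ∀ a ∈ A k, w k ≤ ν.real {a})
    {C : ℝ} (hC : 0 < C) {t : ℕ} (hgrowth : ∀ k, 1 ≤ k → c k / √(w k) ≤ C * (k : ℝ) ^ t) :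
    BernsteinMarkov K ν := by
  intro ε hε
  obtain ⟨D, hD, hDk⟩ := exists_pow_le_mul_pow_of_one_lt t (by linarith : (1 : ℝ) < 1 + ε)
  refine ⟨C * D, mul_pos hC hD, fun k hk p hp z hz => ?_⟩
  set I := ∫ x in K, ‖MvPolynomial.eval x p‖ ^ 2 ∂ν
  have hint : IntegrableOn (fun x => ‖MvPolynomial.eval x p‖ ^ 2) K ν :=
    ((MvPolynomial.continuous_eval p).norm.pow 2).continuousOn.integrableOn_compact hK
  have hc : 0 ≤ c k := zero_le_one.trans ((hnorming k hk).one_le ⟨z, hz⟩)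
  calc ‖MvPolynomial.eval z p‖
      ≤ c k * sSup ((fun a => ‖MvPolynomial.eval a p‖) '' A k) := hnorming k hk p hp z hz
    _ ≤ c k * (√I / √(w k)) := by
      gcongr
      exact sSup_norm_image_le_sqrt_setIntegral_div_sqrt hint (hAK k hk) (hw k hk) (hwA k hk)
    _ = c k / √(w k) * √I := by ring
    _ ≤ C * (D * (1 + ε) ^ k) * √I := by
      gcongr
      exact (hgrowth k hk).trans (by gcongr; exact hDk k)
    _ = C * D * (1 + ε) ^ k * √I := by ring

end NormingSet

theorem wam_gives_bernstein_markov_measure_general {n : ℕ}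
    (K : Set (Fin n → ℂ)) (hK : IsCompact K)
    (A : ℕ → Finset (Fin n → ℂ)) (Ck : ℕ → ℝ)
    (hA : ∀ k : ℕ, 1 ≤ k → (A k : Set (Fin n → ℂ)) ⊆ K)
    (hmesh : ∀ k : ℕ, 1 ≤ k → ∀ p : MvPolynomial (Fin n) ℂ, p.totalDegree ≤ k →
      ∀ z ∈ K, ‖MvPolynomial.eval z p‖ ≤
        Ck k * sSup ((fun a => ‖MvPolynomial.eval a p‖) '' (A k : Set (Fin n → ℂ))))
    (hgrowth : ∃ C s : ℝ, 0 < C ∧ 0 < s ∧ ∀ k : ℕ, 1 ≤ k →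
      Ck k + ((A k).card : ℝ) ≤ C * (k : ℝ) ^ s) :
    ∃ ν : Measure (Fin n → ℂ), IsFiniteMeasure ν ∧ ν Kᶜ = 0 ∧
      ν (⋃ k : ℕ, (A k : Set (Fin n → ℂ)))ᶜ = 0 ∧
      BernsteinMarkov K ν := by
  obtain ⟨C, s, hC, -, hgr⟩ := hgrowth
  set m := ⌈s⌉₊
  have hgr_nat : ∀ k, 1 ≤ k → Ck k + ((A k).card : ℝ) ≤ C * (k : ℝ) ^ m := fun k hk =>
    (hgr k hk).trans (by gcongr; exact rpow_le_pow_natCeil (by exact_mod_cast hk) s)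
  have hcard : ∀ k, 1 ≤ k → ((A k).card : ℝ) ≤ C * (k : ℝ) ^ m := fun k hk => by
    rcases K.eq_empty_or_nonempty with hKe | hKne
    · have hAk : A k = ∅ := Finset.coe_eq_empty.mp (Set.subset_empty_iff.mp (hKe ▸ hA k hk))
      simp only [hAk, Finset.card_empty, Nat.cast_zero]
      positivity
    · linarith [IsNormingSet.one_le (hmesh k hk) hKne, hgr_nat k hk]
  let w : ℕ → ℝ := fun k => ((k : ℝ) ^ (m + 1))⁻¹ ^ 2
  let ν : Measure (Fin n → ℂ) := meshMeasure (fun j => A (j + 1)) (fun j => w (j + 1))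
  have hw : ∀ k, 1 ≤ k → 0 < w k := fun k hk => by
    have : (0 : ℝ) < k := by exact_mod_cast hk
    positivity
  have hν : IsFiniteMeasure ν := isFiniteMeasure_meshMeasure _ _ (fun j => sq_nonneg _)
    (summable_inv_pow_sq_mul_of_le_mul_pow (a := fun k => ((A k).card : ℝ))
      (fun k => Nat.cast_nonneg _) hcard)
  refine ⟨ν, hν, meshMeasure_compl_eq_zero _ _ fun j => hA _ j.succ_pos,
    meshMeasure_compl_eq_zero _ _ fun j => Set.subset_iUnion_of_subset (j + 1) subset_rfl,
    bernsteinMarkov_of_isNormingSet hK hA hmesh (w := w) hw ?_ hC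
      (t := 2 * m + 1) fun k hk => ?_⟩
  · intro k hk a ha
    obtain ⟨j, rfl⟩ := Nat.exists_eq_add_of_le' hk
    exact le_meshMeasure_real_singleton (fun j => A (j + 1)) (fun j => w (j + 1)) (k := j) ha
  · calc Ck k / √(w k) = Ck k * (k : ℝ) ^ (m + 1) := by
          rw [Real.sqrt_sq (by positivity), div_inv_eq_mul]
      _ ≤ C * (k : ℝ) ^ m * (k : ℝ) ^ (m + 1) := by
          gcongr
          linarith [hgr_nat k hk, (A k).card.cast_nonneg (α := ℝ)]
      _ = C * (k : ℝ) ^ (2 * m + 1) := by ring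

/-- If `K ⊂ ℂ^n` is compact and `{A_k}` is a weakly admissible mesh for `K` — i.e.
`A_k ⊆ K` are finite sets with `sup_K |p| ≤ C_k max_{a ∈ A_k} |p(a)|` for all polynomials
`p` of degree at most `k`, where `C_k ≥ 1` and both `C_k` and `card A_k` grow at most
polynomially in `k` — then there exists a finite measure `ν` supported in `K`, carried by
`⋃_k A_k`, such that `(K, ν)` satisfies the Bernstein–Markov property. -/
theorem wam_gives_bernstein_markov_measure {n : ℕ}
    (K : Set (Fin n → ℂ)) (hK : IsCompact K)
    (A : ℕ → Finset (Fin n → ℂ)) (Ck : ℕ → ℝ)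
    (hA : ∀ k : ℕ, 1 ≤ k → (A k : Set (Fin n → ℂ)) ⊆ K)
    (hCk : ∀ k : ℕ, 1 ≤ k → 1 ≤ Ck k)
    (hmesh : ∀ k : ℕ, 1 ≤ k → ∀ p : MvPolynomial (Fin n) ℂ, p.totalDegree ≤ k →
      ∀ z ∈ K, ‖MvPolynomial.eval z p‖ ≤
        Ck k * sSup ((fun a => ‖MvPolynomial.eval a p‖) '' (A k : Set (Fin n → ℂ))))
    (hgrowth : ∃ C s : ℝ, 0 < C ∧ 0 < s ∧ ∀ k : ℕ, 1 ≤ k →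
      Ck k + ((A k).card : ℝ) ≤ C * (k : ℝ) ^ s) :
    ∃ ν : Measure (Fin n → ℂ), IsFiniteMeasure ν ∧ ν Kᶜ = 0 ∧
      ν (⋃ k : ℕ, (A k : Set (Fin n → ℂ)))ᶜ = 0 ∧
      BernsteinMarkov K ν :=
  wam_gives_bernstein_markov_measure_general K hK A Ck hA hmesh hgrowth
end

section
/- Let K ⊂ ℂ^n be compact, let ν be a finite Borel measure on K, and let Q : K → ℝ be continuous (write w = e^{-Q}). Suppose for each k ≥ 1 there are polynomials q_1^{(k)},…,q_{N_k}^{(k)} of degree at most k (N_k = C(n+k,k)) which are orthonormal with respect to the inner product ⟨p, q⟩ := ∫_K p q̄ w^{2k} dν and whose ℂ-linear span contains every polynomial of degree at most k. Define the k-th Bergman function B_k^{ν,w}(z) := ∑_{j=1}^{N_k} |q_j^{(k)}(z)|² w(z)^{2k} for z ∈ K. If (sup_{z ∈ K} B_k^{ν,w}(z))^{1/(2k)} → 1 as k → ∞, then (K, ν, Q) satisfies the weighted Bernstein–Markov property. -/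
/-! Expanding a polynomial `p = ∑ c_j q_j` of degree at most `k` in the orthonormal basis gives
`∫ |p|² w^{2k} dν = ∑ |c_j|²`, so by Cauchy–Schwarz `|p(z)|² w(z)^{2k} ≤ B_k(z) ∫ |p|² w^{2k} dν`.
Hence `√(sup_K B_k)` is a Bernstein–Markov constant in degree `k`; by hypothesis it is at most
`(1 + ε)^k` for large `k`, and the finitely many remaining degrees are absorbed into `C`. -/

open MeasureTheory Filter

variable {n : ℕ}

open ComplexConjugate

theorem norm_sum_mul_sq_le {ι : Type*} (s : Finset ι) (c f : ι → ℂ) :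
    ‖∑ j ∈ s, c j * f j‖ ^ 2 ≤ (∑ j ∈ s, ‖c j‖ ^ 2) * ∑ j ∈ s, ‖f j‖ ^ 2 :=
  calc ‖∑ j ∈ s, c j * f j‖ ^ 2 ≤ (∑ j ∈ s, ‖c j‖ * ‖f j‖) ^ 2 := by
        gcongr
        exact (norm_sum_le _ _).trans_eq (by simp only [norm_mul])
    _ ≤ _ := Finset.sum_mul_sq_le_sq_mul_sq _ _ _

section Orthonormal

variable {α ι : Type*} [MeasurableSpace α] [Fintype ι] [DecidableEq ι] {μ : Measure α}
  {W : α → ℝ} {f : ι → α → ℂ}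

theorem integral_norm_sum_sq_mul_eq_of_orthonormal
    (hint : ∀ i j, Integrable (fun x => f i x * conj (f j x) * (W x : ℂ)) μ)
    (hortho : ∀ i j, ∫ x, f i x * conj (f j x) * (W x : ℂ) ∂μ = if i = j then 1 else 0)
    (c : ι → ℂ) :
    ∫ x, ‖∑ j, c j * f j x‖ ^ 2 * W x ∂μ = ∑ j, ‖c j‖ ^ 2 := by
  have hexpand : ∀ x, ((‖∑ j, c j * f j x‖ ^ 2 * W x : ℝ) : ℂ) =
      ∑ i, ∑ j, c i * conj (c j) * (f i x * conj (f j x) * (W x : ℂ)) := by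
    intro x
    rw [Complex.ofReal_mul, Complex.ofReal_pow, ← Complex.mul_conj', map_sum, Finset.sum_mul_sum,
      Finset.sum_mul]
    refine Finset.sum_congr rfl fun i _ => ?_
    rw [Finset.sum_mul]
    refine Finset.sum_congr rfl fun j _ => ?_
    rw [map_mul]
    ring
  apply Complex.ofReal_injective
  rw [← integral_complex_ofReal, integral_congr_ae (Eventually.of_forall hexpand),
    integral_finsetSum _ fun i _ => integrable_finsetSum _ fun j _ => (hint i j).const_mul _,
    Complex.ofReal_sum]
  refine Finset.sum_congr rfl fun i _ => ?_
  simp only [integral_finsetSum _ fun j _ => (hint i j).const_mul _, integral_const_mul, hortho,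
    mul_ite, mul_one, mul_zero, Finset.sum_ite_eq, Finset.mem_univ, if_true, Complex.mul_conj',
    Complex.ofReal_pow]

theorem norm_sum_sq_mul_le_of_orthonormal
    (hint : ∀ i j, Integrable (fun x => f i x * conj (f j x) * (W x : ℂ)) μ)
    (hortho : ∀ i j, ∫ x, f i x * conj (f j x) * (W x : ℂ) ∂μ = if i = j then 1 else 0)
    (c : ι → ℂ) {z : α} (hz : 0 ≤ W z) :
    ‖∑ j, c j * f j z‖ ^ 2 * W z ≤
      (∑ j, ‖f j z‖ ^ 2 * W z) * ∫ x, ‖∑ j, c j * f j x‖ ^ 2 * W x ∂μ := by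
  rw [integral_norm_sum_sq_mul_eq_of_orthonormal hint hortho, ← Finset.sum_mul]
  calc ‖∑ j, c j * f j z‖ ^ 2 * W z ≤ ((∑ j, ‖c j‖ ^ 2) * ∑ j, ‖f j z‖ ^ 2) * W z := by
        gcongr
        exact norm_sum_mul_sq_le _ _ _
    _ = _ := by ring

end Orthonormal

theorem Real.sqrt_le_pow_of_rpow_one_div_two_mul_le {s r : ℝ} {k : ℕ} (hs : 0 ≤ s) (hk : k ≠ 0)
    (h : s ^ ((1 : ℝ) / (2 * k)) ≤ r) : √s ≤ r ^ k :=
  calc √s = (s ^ ((1 : ℝ) / (2 * k))) ^ k := by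
        rw [Real.sqrt_eq_rpow, ← Real.rpow_mul_natCast hs]
        field_simp
    _ ≤ r ^ k := pow_le_pow_left₀ (by positivity) h k

theorem exists_pos_forall_le_mul_pow_of_eventually_le {a : ℕ → ℝ} {r : ℝ} (hr : 1 ≤ r)
    (h : ∀ᶠ k in atTop, a k ≤ r ^ k) : ∃ C, 0 < C ∧ ∀ k, a k ≤ C * r ^ k := by
  obtain ⟨k₀, hk₀⟩ := eventually_atTop.mp h
  set C := 1 + ∑ i ∈ Finset.range k₀, |a i|
  have hC : 1 ≤ C := le_add_of_nonneg_right (Finset.sum_nonneg fun i _ => abs_nonneg _)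
  refine ⟨C, by linarith, fun k => ?_⟩
  have hrk : 1 ≤ r ^ k := one_le_pow₀ hr
  rcases lt_or_ge k k₀ with hk | hk
  · calc a k ≤ |a k| := le_abs_self _
      _ ≤ ∑ i ∈ Finset.range k₀, |a i| :=
        Finset.single_le_sum (f := fun i => |a i|) (fun i _ => abs_nonneg _)
          (Finset.mem_range.mpr hk)
      _ ≤ C := le_add_of_nonneg_left zero_le_one
      _ ≤ C * r ^ k := le_mul_of_one_le_right (by linarith) hrk
  · calc a k ≤ r ^ k := hk₀ k hk
      _ ≤ C * r ^ k := le_mul_of_one_le_left (by linarith) hC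

section Bergman

variable {m : ℕ}

noncomputable def bergmanFunction (Q : (Fin n → ℂ) → ℝ) (k : ℕ)
    (q : Fin m → MvPolynomial (Fin n) ℂ) (z : Fin n → ℂ) : ℝ :=
  ∑ j, ‖MvPolynomial.eval z (q j)‖ ^ 2 * Real.exp (-Q z) ^ (2 * k)

theorem bergmanFunction_nonneg (Q : (Fin n → ℂ) → ℝ) (k : ℕ)
    (q : Fin m → MvPolynomial (Fin n) ℂ) (z : Fin n → ℂ) : 0 ≤ bergmanFunction Q k q z :=
  Finset.sum_nonneg fun _ _ => by positivity

theorem continuousOn_bergmanFunction {K : Set (Fin n → ℂ)} {Q : (Fin n → ℂ) → ℝ}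
    (hQ : ContinuousOn Q K) (k : ℕ) (q : Fin m → MvPolynomial (Fin n) ℂ) :
    ContinuousOn (bergmanFunction Q k q) K :=
  continuousOn_finsetSum _ fun _ _ =>
    ((MvPolynomial.continuous_eval _).norm.pow 2).continuousOn.mul
      ((Real.continuous_exp.comp_continuousOn hQ.neg).pow _)

theorem sSup_image_bergmanFunction_nonneg (K : Set (Fin n → ℂ)) (Q : (Fin n → ℂ) → ℝ) (k : ℕ)
    (q : Fin m → MvPolynomial (Fin n) ℂ) : 0 ≤ sSup (bergmanFunction Q k q '' K) :=
  Real.sSup_nonneg (Set.forall_mem_image.2 fun z _ => bergmanFunction_nonneg Q k q z)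

theorem norm_eval_mul_exp_pow_le_sqrt_sSup_bergmanFunction_mul {K : Set (Fin n → ℂ)}
    (hK : IsCompact K) (ν : Measure (Fin n → ℂ)) [IsFiniteMeasure ν] {Q : (Fin n → ℂ) → ℝ}
    (hQ : ContinuousOn Q K) (k : ℕ) (q : Fin m → MvPolynomial (Fin n) ℂ)
    (hortho : ∀ i j : Fin m,
      (∫ z in K, MvPolynomial.eval z (q i) * conj (MvPolynomial.eval z (q j)) *
        ((Real.exp (-Q z) ^ (2 * k) : ℝ) : ℂ) ∂ν) = if i = j then 1 else 0)
    {p : MvPolynomial (Fin n) ℂ} (hp : p ∈ Submodule.span ℂ (Set.range q))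
    {z : Fin n → ℂ} (hz : z ∈ K) :
    ‖MvPolynomial.eval z p‖ * Real.exp (-Q z) ^ k ≤
      √(sSup (bergmanFunction Q k q '' K)) *
        √(∫ w in K, ‖MvPolynomial.eval w p‖ ^ 2 * Real.exp (-Q w) ^ (2 * k) ∂ν) := by
  obtain ⟨c, rfl⟩ := (Submodule.mem_span_range_iff_exists_fun ℂ).mp hp
  have heval : ∀ w,
      MvPolynomial.eval w (∑ j, c j • q j) = ∑ j, c j * MvPolynomial.eval w (q j) :=
    fun w => by simp [MvPolynomial.smul_eq_C_mul]
  have hweight : ContinuousOn (fun w => ((Real.exp (-Q w) ^ (2 * k) : ℝ) : ℂ)) K :=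
    Complex.continuous_ofReal.comp_continuousOn
      ((Real.continuous_exp.comp_continuousOn hQ.neg).pow _)
  have hint : ∀ i j, IntegrableOn (fun w => MvPolynomial.eval w (q i) *
      conj (MvPolynomial.eval w (q j)) * ((Real.exp (-Q w) ^ (2 * k) : ℝ) : ℂ)) K ν :=
    fun i j => (((MvPolynomial.continuous_eval _).mul
      (continuous_star.comp (MvPolynomial.continuous_eval _))).continuousOn.mul
        hweight).integrableOn_compact hK
  have hpoint := norm_sum_sq_mul_le_of_orthonormal hint hortho c
    (pow_nonneg (Real.exp_pos (-Q z)).le (2 * k))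
  simp only [← heval] at hpoint
  have hsup : bergmanFunction Q k q z ≤ sSup (bergmanFunction Q k q '' K) :=
    le_csSup (hK.image_of_continuousOn (continuousOn_bergmanFunction hQ k q)).bddAbove
      ⟨z, hz, rfl⟩
  rw [← Real.sqrt_mul (sSup_image_bergmanFunction_nonneg K Q k q)]
  refine Real.le_sqrt_of_sq_le ?_
  calc (‖MvPolynomial.eval z (∑ j, c j • q j)‖ * Real.exp (-Q z) ^ k) ^ 2
      = ‖MvPolynomial.eval z (∑ j, c j • q j)‖ ^ 2 * Real.exp (-Q z) ^ (2 * k) := by ring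
    _ ≤ bergmanFunction Q k q z * ∫ w in K, ‖MvPolynomial.eval w (∑ j, c j • q j)‖ ^ 2 *
          Real.exp (-Q w) ^ (2 * k) ∂ν := hpoint
    _ ≤ _ := by gcongr

end Bergman

theorem bergman_growth_implies_weighted_bernstein_markov_general
    (K : Set (Fin n → ℂ)) (hK : IsCompact K)
    (ν : Measure (Fin n → ℂ)) [IsFiniteMeasure ν]
    (Q : (Fin n → ℂ) → ℝ) (hQ : ContinuousOn Q K)
    (q : ∀ k : ℕ, Fin ((n + k).choose k) → MvPolynomial (Fin n) ℂ)
    (hortho : ∀ k : ℕ, 1 ≤ k → ∀ i j : Fin ((n + k).choose k),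
      (∫ z in K, MvPolynomial.eval z (q k i) *
        (starRingEnd ℂ) (MvPolynomial.eval z (q k j)) *
        ((Real.exp (-Q z) ^ (2 * k) : ℝ) : ℂ) ∂ν) = if i = j then 1 else 0)
    (hspan : ∀ k : ℕ, 1 ≤ k → ∀ p : MvPolynomial (Fin n) ℂ, p.totalDegree ≤ k →
      p ∈ Submodule.span ℂ (Set.range (q k)))
    (hB : Tendsto (fun k : ℕ =>
        (sSup ((fun z : Fin n → ℂ =>
          ∑ j, ‖MvPolynomial.eval z (q k j)‖ ^ 2 * Real.exp (-Q z) ^ (2 * k)) '' K)) ^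
            ((1 : ℝ) / (2 * (k : ℝ)))) atTop (nhds 1)) :
    WeightedBernsteinMarkov K ν Q := by
  intro ε hε
  set S : ℕ → ℝ := fun k => sSup (bergmanFunction Q k (q k) '' K)
  have hgrowth : ∀ᶠ k in atTop, √(S k) ≤ (1 + ε) ^ k :=
    ((hB.eventually_le_const (by linarith)).and (eventually_ne_atTop 0)).mono
      fun k ⟨hk, hk0⟩ => Real.sqrt_le_pow_of_rpow_one_div_two_mul_le
        (sSup_image_bergmanFunction_nonneg K Q k (q k)) hk0 hk
  obtain ⟨C, hC, hSC⟩ := exists_pos_forall_le_mul_pow_of_eventually_le (by linarith) hgrowth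
  refine ⟨C, hC, fun k hk p hp z hz => ?_⟩
  calc ‖MvPolynomial.eval z p‖ * Real.exp (-Q z) ^ k
      ≤ √(S k) * √(∫ w in K, ‖MvPolynomial.eval w p‖ ^ 2 * Real.exp (-Q w) ^ (2 * k) ∂ν) :=
        norm_eval_mul_exp_pow_le_sqrt_sSup_bergmanFunction_mul hK ν hQ k (q k) (hortho k hk)
          (hspan k hk p hp) hz
    _ ≤ _ := by gcongr; exact hSC k

/-- If the `k`-th Bergman functions `B_k^{ν,w}(z) = ∑_j |q_j^{(k)}(z)|² w(z)^{2k}`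
(built from orthonormal bases `q_1^{(k)},…,q_{N_k}^{(k)}` of the polynomials of degree at
most `k` for the weighted `L²(ν)` inner product) satisfy
`(sup_K B_k^{ν,w})^{1/(2k)} → 1`, then `(K, ν, Q)` satisfies the weighted
Bernstein–Markov property. -/
theorem bergman_growth_implies_weighted_bernstein_markov
    (K : Set (Fin n → ℂ)) (hK : IsCompact K)
    (ν : Measure (Fin n → ℂ)) [IsFiniteMeasure ν] (hν : ν Kᶜ = 0)
    (Q : (Fin n → ℂ) → ℝ) (hQ : ContinuousOn Q K)
    (q : ∀ k : ℕ, Fin ((n + k).choose k) → MvPolynomial (Fin n) ℂ)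
    (hqdeg : ∀ k : ℕ, 1 ≤ k → ∀ j, (q k j).totalDegree ≤ k)
    (hortho : ∀ k : ℕ, 1 ≤ k → ∀ i j : Fin ((n + k).choose k),
      (∫ z in K, MvPolynomial.eval z (q k i) *
        (starRingEnd ℂ) (MvPolynomial.eval z (q k j)) *
        ((Real.exp (-Q z) ^ (2 * k) : ℝ) : ℂ) ∂ν) = if i = j then 1 else 0)
    (hspan : ∀ k : ℕ, 1 ≤ k → ∀ p : MvPolynomial (Fin n) ℂ, p.totalDegree ≤ k →
      p ∈ Submodule.span ℂ (Set.range (q k)))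
    (hB : Tendsto (fun k : ℕ =>
        (sSup ((fun z : Fin n → ℂ =>
          ∑ j, ‖MvPolynomial.eval z (q k j)‖ ^ 2 * Real.exp (-Q z) ^ (2 * k)) '' K)) ^
            ((1 : ℝ) / (2 * (k : ℝ)))) atTop (nhds 1)) :
    WeightedBernsteinMarkov K ν Q :=
  bergman_growth_implies_weighted_bernstein_markov_general K hK ν Q hQ q hortho hspan hB
end
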